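/- arXiv:2405.04638 — 9 statements merged into one kernel-verified Lean document; each statement's English description precedes it below -/
import Mathlib

section
/- Let p be prime and let A, B be finite nonempty subsets of Z_p of cardinalities s and t. For i ≥ 1 let S_i be the set of elements of Z_p expressible in at least i ways as a+b with a ∈ A, b ∈ B. Then for every j with 1 ≤ j ≤ min(s,t), Σ_{i=1}^{j} |S_i| ≥ j · min(p, s+t−j). -/
/-!
Write `r(c)` for the number of representations `c = a + b`; then
`∑_{i ≤ j} |S_i| = ∑_c min(j, r(c))`, and the bound is proved for every finite abelian group of
prime order `p` by strong induction on `|B|`. The Dyson e-transform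
`(A, B) ↦ (A ∪ (e + B), B ∩ (A - e))` preserves `|A| + |B|` and does not increase any `r(c)`, and
since the group has prime order some `e` makes `B ∩ (A - e)` a nonempty proper subset of `B`.
If it still has at least `j` elements, induction applies to the transformed pair. Otherwise pass
to the complement: `r_A(c) + r_{Aᶜ}(c) = |B|` makes the statement for `(A, B, j)` follow from the
one for `(Aᶜ, B, |B| - j)`, and transforming `(Aᶜ, B)` by the same `e` leaves a second set that is
smaller than `B` but still has more than `|B| - j` elements.
-/

open Finset
open scoped Pointwise

section

variable {α : Type*} [AddCommGroup α] [DecidableEq α]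

def repCount (A B : Finset α) (c : α) : ℕ := #{x ∈ A ×ˢ B | x.1 + x.2 = c}

lemma repCount_eq_card_filter (A B : Finset α) (c : α) :
    repCount A B c = #{b ∈ B | c - b ∈ A} := by
  refine card_nbij' Prod.snd (fun b => (c - b, b)) ?_ ?_ ?_ ?_
  · rintro ⟨a, b⟩ h
    simp only [coe_filter, mem_product, Set.mem_ofPred_eq] at h ⊢
    rw [← h.2, add_sub_cancel_right]
    exact ⟨h.1.2, h.1.1⟩
  · intro b h
    simp only [coe_filter, mem_product, Set.mem_ofPred_eq] at h ⊢
    exact ⟨⟨h.2, h.1⟩, sub_add_cancel c b⟩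
  · rintro ⟨a, b⟩ h
    simp only [coe_filter, mem_product, Set.mem_ofPred_eq] at h
    simp [← h.2]
  · intro b _
    rfl

lemma repCount_le_card_left (A B : Finset α) (c : α) : repCount A B c ≤ #A :=
  card_le_card_of_injOn Prod.fst (fun x hx => (mem_product.1 (mem_filter.1 hx).1).1)
    fun x hx y hy hxy => by
      simp only [coe_filter, Set.mem_ofPred_eq] at hx hy
      exact Prod.ext hxy (add_left_cancel (hx.2.trans (hy.2.symm.trans (by rw [hxy]))))

lemma repCount_le_card_right (A B : Finset α) (c : α) : repCount A B c ≤ #B := by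
  rw [repCount_eq_card_filter]
  exact card_filter_le _ _

lemma repCount_addDysonETransform_le (e : α) (x : Finset α × Finset α) (c : α) :
    repCount (addDysonETransform e x).1 (addDysonETransform e x).2 c ≤ repCount x.1 x.2 c := by
  refine card_le_card_of_injOn (fun y => if y.1 ∈ x.1 then y else (y.2 + e, y.1 - e)) ?_ ?_
  · rintro ⟨a, b⟩ h
    simp only [coe_filter, mem_product, addDysonETransform_fst, addDysonETransform_snd, mem_union,
      mem_inter, mem_neg_vadd_finset_iff, vadd_eq_add, Set.mem_ofPred_eq] at h ⊢
    obtain ⟨⟨ha, hb, hbe⟩, rfl⟩ := h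
    split_ifs with ha'
    · exact ⟨⟨ha', hb⟩, rfl⟩
    · obtain ⟨b', hb', rfl⟩ := mem_vadd_finset.1 (ha.resolve_left ha')
      refine ⟨⟨by rwa [add_comm], by simpa⟩, by simp only [vadd_eq_add]; abel⟩
  · rintro ⟨a₁, b₁⟩ h₁ ⟨a₂, b₂⟩ h₂ h
    simp only [coe_filter, mem_product, addDysonETransform_fst, addDysonETransform_snd, mem_union,
      mem_inter, mem_neg_vadd_finset_iff, vadd_eq_add, Set.mem_ofPred_eq] at h₁ h₂
    dsimp only at h
    split_ifs at h with ha₁ ha₂ ha₂ <;> simp only [Prod.mk.injEq] at h ⊢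
    · exact h
    · exact absurd (show a₂ = e + b₁ by rw [h.2]; abel ▸ h₁.1.2.2) ha₂
    · exact absurd (show a₁ = e + b₂ by rw [← h.2]; abel ▸ h₂.1.2.2) ha₁
    · exact ⟨sub_left_injective h.2, add_right_cancel h.1⟩

variable [Fintype α]

lemma repCount_add_repCount_compl (A B : Finset α) (c : α) :
    repCount A B c + repCount Aᶜ B c = #B := by
  simp only [repCount_eq_card_filter, mem_compl]
  exact card_filter_add_card_filter_not _

lemma card_add_card_le_repCount (A B : Finset α) (c : α) :
    #A + #B ≤ Fintype.card α + repCount A B c := by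
  have := repCount_add_repCount_compl A B c
  have := repCount_le_card_left Aᶜ B c
  have := card_compl_add_card A
  omega

lemma sum_repCount (A B : Finset α) : ∑ c, repCount A B c = #A * #B := by
  rw [← card_product]
  exact (card_eq_sum_card_fiberwise fun _ _ => mem_univ _).symm

lemma card_addDysonETransform_compl_snd_add (e : α) (A B : Finset α) :
    #(addDysonETransform e (Aᶜ, B)).2 + #(addDysonETransform e (A, B)).2 = #B := by
  simp only [addDysonETransform_snd, compl_eq_univ_sdiff, vadd_finset_sdiff, vadd_finset_univ]
  rw [← compl_eq_univ_sdiff, ← sdiff_eq_inter_compl, add_comm]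
  exact card_inter_add_card_sdiff _ _

lemma sum_card_filter_le_eq_sum_min {ι : Type*} [Fintype ι] (f : ι → ℕ) (j : ℕ) :
    ∑ i ∈ Icc 1 j, #{x | i ≤ f x} = ∑ x, min j (f x) := by
  simp only [card_filter]
  rw [sum_comm]
  refine sum_congr rfl fun x _ => ?_
  rw [← card_filter]
  have : {i ∈ Icc 1 j | i ≤ f x} = Icc 1 (min j (f x)) := by
    ext
    simp only [mem_filter, mem_Icc, le_inf_iff]
    omega
  simp [this]

def cappedRepSum (A B : Finset α) (j : ℕ) : ℕ := ∑ c, min j (repCount A B c)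

lemma cappedRepSum_eq_mul_of_card_le {A B : Finset α} {j : ℕ} (hj : #B ≤ j) :
    cappedRepSum A B j = #A * #B := by
  rw [← sum_repCount]
  exact sum_congr rfl fun c _ => min_eq_right ((repCount_le_card_right A B c).trans hj)

lemma cappedRepSum_eq_mul_of_add_le {A B : Finset α} {j : ℕ}
    (h : j + Fintype.card α ≤ #A + #B) :
    cappedRepSum A B j = j * Fintype.card α := by
  rw [cappedRepSum, ← card_univ, mul_comm, ← smul_eq_mul, ← sum_const]
  exact sum_congr rfl fun c _ => min_eq_left (by have := card_add_card_le_repCount A B c; omega)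

lemma cappedRepSum_addDysonETransform_le (e : α) (x : Finset α × Finset α) (j : ℕ) :
    cappedRepSum (addDysonETransform e x).1 (addDysonETransform e x).2 j ≤
      cappedRepSum x.1 x.2 j :=
  sum_le_sum fun c _ => min_le_min_left j (repCount_addDysonETransform_le e x c)

lemma cappedRepSum_add_card_compl_mul {A B : Finset α} {j : ℕ} (hj : j ≤ #B) :
    cappedRepSum A B j + #Aᶜ * #B = j * Fintype.card α + cappedRepSum Aᶜ B (#B - j) := by
  have hpoint (c : α) : min j (repCount A B c) + repCount Aᶜ B c =
      j + min (#B - j) (repCount Aᶜ B c) := by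
    have := repCount_add_repCount_compl A B c
    omega
  rw [← sum_repCount, cappedRepSum, cappedRepSum, ← sum_add_distrib,
    sum_congr rfl fun c _ => hpoint c, sum_add_distrib, sum_const, card_univ, smul_eq_mul, mul_comm]

lemma le_cappedRepSum_of_compl {A B : Finset α} {j : ℕ} (hjA : j ≤ #A) (hjB : j ≤ #B)
    (h : (#B - j) * (#Aᶜ + j) ≤ cappedRepSum Aᶜ B (#B - j)) :
    j * (#A + #B - j) ≤ cappedRepSum A B j := by
  have hdual := cappedRepSum_add_card_compl_mul (A := A) hjB
  rw [← card_compl_add_card A] at hdual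
  obtain ⟨u, hu⟩ := Nat.exists_eq_add_of_le hjB
  rw [hu, Nat.add_sub_cancel_left] at h hdual
  rw [hu, show #A + (j + u) - j = #A + u by omega]
  nlinarith

lemma eq_univ_of_vadd_finset_subset (hp : (Fintype.card α).Prime) {A : Finset α}
    (hA : A.Nonempty) {d : α} (hd : d ≠ 0) (h : d +ᵥ A ⊆ A) : A = univ := by
  have : Fact (Nat.card α).Prime := ⟨by rwa [Nat.card_eq_fintype_card]⟩
  have hdA : d ∈ AddAction.stabilizer α A :=
    AddAction.mem_stabilizer_iff.2 (eq_of_subset_of_card_le h (card_vadd_finset d A).ge)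
  have htop : AddAction.stabilizer α A = ⊤ :=
    (AddSubgroup.eq_bot_or_eq_top_of_prime_card _).resolve_left fun hbot =>
      hd (by rwa [hbot, AddSubgroup.mem_bot] at hdA)
  obtain ⟨a, ha⟩ := hA
  refine eq_univ_of_forall fun y => ?_
  have hy : (y - a : α) +ᵥ A = A :=
    AddAction.mem_stabilizer_iff.1 (htop ▸ AddSubgroup.mem_top _)
  have hya := vadd_mem_vadd_finset (a := y - a) ha
  rwa [hy, vadd_eq_add, sub_add_cancel] at hya

lemma exists_addDysonETransform_snd_card (hp : (Fintype.card α).Prime) {A B : Finset α}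
    (hA : A.Nonempty) (hAu : A ≠ univ) (hB : 1 < #B) :
    ∃ e, 0 < #(addDysonETransform e (A, B)).2 ∧ #(addDysonETransform e (A, B)).2 < #B := by
  by_contra! hfull
  obtain ⟨b, hb, b', hb', hbb'⟩ := one_lt_card.1 hB
  refine hAu (eq_univ_of_vadd_finset_subset hp hA (sub_ne_zero.2 hbb') fun y hy => ?_)
  obtain ⟨a, ha, rfl⟩ := mem_vadd_finset.1 hy
  have hsub : B ⊆ -(a - b') +ᵥ A := by
    have hb'S : b' ∈ B ∩ (-(a - b') +ᵥ A) :=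
      mem_inter.2 ⟨hb', mem_neg_vadd_finset_iff.2 (by simpa using ha)⟩
    exact inter_eq_left.1 (eq_of_subset_of_card_le inter_subset_left
      (hfull (a - b') (card_pos.2 ⟨b', hb'S⟩)))
  have hab := mem_neg_vadd_finset_iff.1 (hsub hb)
  rwa [vadd_eq_add, sub_add_comm] at hab

theorem mul_min_le_cappedRepSum (hp : (Fintype.card α).Prime) {A B : Finset α} {j : ℕ}
    (hj : 1 ≤ j) (hjA : j ≤ #A) (hjB : j ≤ #B) :
    j * min (Fintype.card α) (#A + #B - j) ≤ cappedRepSum A B j := by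
  induction hn : #B using Nat.strong_induction_on generalizing A B j with
  | _ n ih =>
  subst hn
  rcases le_or_gt (Fintype.card α) (#A + #B - j) with hsat | hsat
  · rw [min_eq_left hsat, cappedRepSum_eq_mul_of_add_le (by omega)]
  rw [min_eq_right hsat.le]
  obtain rfl | hjB := hjB.eq_or_lt
  · rw [cappedRepSum_eq_mul_of_card_le le_rfl, Nat.add_sub_cancel, mul_comm]
  have hAu : A ≠ univ := by
    rintro rfl
    rw [card_univ] at hsat
    omega
  obtain ⟨e, he, heB⟩ :=
    exists_addDysonETransform_snd_card (B := B) hp (card_pos.1 (by omega)) hAu (by omega)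
  set D := addDysonETransform e (A, B) with hD
  rcases le_or_gt j #D.2 with hjD | hjD
  · calc j * (#A + #B - j) = j * min (Fintype.card α) (#D.1 + #D.2 - j) := by
          rw [hD, addDysonETransform.card, min_eq_right hsat.le]
      _ ≤ cappedRepSum D.1 D.2 j :=
          ih _ heB hj (hjA.trans (card_le_card subset_union_left)) hjD rfl
      _ ≤ cappedRepSum A B j := cappedRepSum_addDysonETransform_le e (A, B) j
  · set D' := addDysonETransform e (Aᶜ, B)
    have hD'B : #D'.2 + #D.2 = #B := card_addDysonETransform_compl_snd_add e A B
    have hD'card : #D'.1 + #D'.2 = #Aᶜ + #B := addDysonETransform.card e (Aᶜ, B)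
    have hAc := card_compl_add_card A
    have hD'A : #Aᶜ ≤ #D'.1 := card_le_card subset_union_left
    refine le_cappedRepSum_of_compl hjA hjB.le ?_
    calc (#B - j) * (#Aᶜ + j)
        = (#B - j) * min (Fintype.card α) (#D'.1 + #D'.2 - (#B - j)) := by
          congr 1
          omega
      _ ≤ cappedRepSum D'.1 D'.2 (#B - j) := ih _ (by omega) (by omega) (by omega) (by omega) rfl
      _ ≤ cappedRepSum Aᶜ B (#B - j) := cappedRepSum_addDysonETransform_le e (Aᶜ, B) _

end

theorem stmt_3_general {p : ℕ} [NeZero p] (hp : p.Prime) (A B : Finset (ZMod p))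
    (j : ℕ) (hj1 : 1 ≤ j) (hj2 : j ≤ min A.card B.card) :
    j * min p (A.card + B.card - j)
      ≤ ∑ i ∈ Finset.Icc 1 j,
          (Finset.univ.filter
            (fun c : ZMod p => i ≤ ((A ×ˢ B).filter (fun x => x.1 + x.2 = c)).card)).card := by
  rw [sum_card_filter_le_eq_sum_min]
  obtain ⟨hjA, hjB⟩ := le_min_iff.1 hj2
  have h := mul_min_le_cappedRepSum (by rwa [ZMod.card]) hj1 hjA hjB
  rwa [ZMod.card] at h

/-- Pollard's generalization of the Cauchy–Davenport Theorem. -/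
theorem stmt_3 {p : ℕ} [NeZero p] (hp : p.Prime) (A B : Finset (ZMod p))
    (hA : A.Nonempty) (hB : B.Nonempty) (j : ℕ) (hj1 : 1 ≤ j)
    (hj2 : j ≤ min A.card B.card) :
    j * min p (A.card + B.card - j)
      ≤ ∑ i ∈ Finset.Icc 1 j,
          (Finset.univ.filter
            (fun c : ZMod p => i ≤ ((A ×ˢ B).filter (fun x => x.1 + x.2 = c)).card)).card :=
  stmt_3_general hp A B j hj1 hj2
end

section
/- Let p be prime, let A, B be subsets of Z_p of cardinalities s, t ≥ 1, and let S_i be as in Pollard's theorem. Then for every j with 1 ≤ j ≤ min(s,t), r(A,B,B) ≥ j · min(p, s+t−j) − j(p−t). -/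
/-!
Counting triples by their last coordinate, `r(A,B,B) = ∑_{c ∈ B} r(c) ≥ ∑_{c ∈ B} min(j, r(c))`,
and the terms with `c ∉ B` of `∑_c min(j, r(c)) = ∑_{i=1}^j |S_i|` add up to at most `j(p - t)`.
So the bound follows from Pollard's theorem `∑_{i=1}^j |S_i| ≥ j · min(p, s + t - j)`.

If `|A| + |B| ≥ p + j`, every `c` has at least `j` representations. Otherwise it suffices to show
`δ_j(A, B) = ∑_c min(j, r(c)) - j(|A| + |B| - j) ≥ 0`, by strong induction on `|A|`.
Dyson's transform `(A, B) ↦ (A ∩ (B + e), B ∪ (A - e))` preserves `|A| + |B|` and does not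
increase `δ_j`, while `(A, B, j) ↦ (A, Bᶜ, |A| - j)` leaves `δ` unchanged. Let
`g = |A ∩ (B + e)|`. If `j ≤ g < min(|A|, |B|)` for some `e`, transform; if `0 < g < j`,
transform `(A, Bᶜ)` and complement back, which replaces `j` by `j - g`. Otherwise every nonempty
`A ∩ (B + e)` is as large as possible; then the larger of `A`, `B` is invariant under a nonzero
translation, hence is all of `ZMod p`, contradicting `|A| + |B| < p + j`.
-/

open Finset

namespace Pollard

section Representations

variable {p : ℕ} {A B : Finset (ZMod p)} {c e : ZMod p}

def repCount (A B : Finset (ZMod p)) (c : ZMod p) : ℕ := #{a ∈ A | c - a ∈ B}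

def dysonFst (e : ZMod p) (A B : Finset (ZMod p)) : Finset (ZMod p) := {a ∈ A | a - e ∈ B}

def dysonSnd (e : ZMod p) (A B : Finset (ZMod p)) : Finset (ZMod p) := B ∪ A.image (· - e)

lemma repCount_le_card_left : repCount A B c ≤ #A := card_filter_le _ _

lemma repCount_comm : repCount A B c = repCount B A c :=
  card_equiv (Equiv.subLeft c) fun a => by simp [and_comm]

lemma repCount_le_card_right : repCount A B c ≤ #B :=
  repCount_comm.trans_le repCount_le_card_left

lemma card_dysonFst : #(dysonFst e A B) = #{b ∈ B | b + e ∈ A} :=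
  card_equiv (Equiv.subRight e) fun a => by simp [dysonFst, and_comm]

lemma card_dysonFst_add_card_dysonSnd : #(dysonFst e A B) + #(dysonSnd e A B) = #A + #B := by
  have hinter : B ∩ A.image (· - e) = {b ∈ B | b + e ∈ A} := by
    ext b; simp [sub_eq_iff_eq_add]
  have := card_union_add_card_inter B (A.image (· - e))
  rw [card_image_of_injective _ sub_left_injective, hinter, ← card_dysonFst] at this
  rw [dysonSnd]; omega

lemma repCount_dyson_le : repCount (dysonFst e A B) (dysonSnd e A B) c ≤ repCount A B c := by
  -- If `c - w ∉ B` then `c - w = a - e` with `a ∈ A`, and `c = (c + e - w) + (w - e)`.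
  refine card_le_card_of_injOn (fun w => if c - w ∈ B then w else c + e - w) ?_ ?_
  · intro w hw
    simp only [dysonFst, dysonSnd, coe_filter, Set.mem_ofPred_eq, mem_filter, mem_union,
      mem_image] at hw ⊢
    obtain ⟨⟨hwA, hweB⟩, hcw | ⟨a, haA, hae⟩⟩ := hw
    · simp [hcw, hwA]
    · split_ifs with hcw
      · exact ⟨hwA, hcw⟩
      · obtain rfl : a = c + e - w := by linear_combination hae
        exact ⟨haA, by rwa [show c - (c + e - w) = w - e by ring]⟩
  · intro w₁ hw₁ w₂ hw₂ h
    simp only [dysonFst, coe_filter, Set.mem_ofPred_eq, mem_filter] at hw₁ hw₂ h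
    split_ifs at h with h₁ h₂ h₂
    · exact h
    · exact absurd (by rw [show c - w₂ = w₁ - e by rw [h]; ring]; exact hw₁.1.2) h₂
    · exact absurd (by rw [show c - w₁ = w₂ - e by rw [← h]; ring]; exact hw₂.1.2) h₁
    · linear_combination -h

lemma card_triples_eq_sum_repCount :
    #{x ∈ A ×ˢ B ×ˢ B | x.2.2 = x.1 + x.2.1} = ∑ c ∈ B, repCount A B c := by
  rw [card_eq_sum_card_fiberwise (f := fun x => x.2.2) (t := B) fun x hx =>
    (mem_product.mp (mem_product.mp (mem_filter.mp hx).1).2).2]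
  refine sum_congr rfl fun c hc => card_nbij' (·.1) (fun a => (a, c - a, c)) ?_ ?_ ?_ ?_
  · rintro ⟨a, b, b'⟩ h
    simp only [coe_filter, mem_filter, mem_product, Set.mem_ofPred_eq] at h
    obtain ⟨⟨⟨ha, hb, -⟩, rfl⟩, rfl⟩ := h
    simpa [repCount, ha] using hb
  · intro a ha
    simp only [coe_filter, Set.mem_ofPred_eq] at ha
    simp [ha, hc]
  · rintro ⟨a, b, b'⟩ h
    simp only [coe_filter, mem_filter, mem_product, Set.mem_ofPred_eq] at h
    obtain ⟨⟨-, rfl⟩, rfl⟩ := h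
    simp
  · intro a _
    rfl

end Representations

section Finite

variable {p : ℕ} [NeZero p] {A B : Finset (ZMod p)} {c e : ZMod p} {j : ℕ}

/-- `truncRepSum j A B = ∑_{i=1}^j |S_i|`. -/
def truncRepSum (j : ℕ) (A B : Finset (ZMod p)) : ℕ := ∑ c, min j (repCount A B c)

def pollardDefect (j : ℕ) (A B : Finset (ZMod p)) : ℤ :=
  truncRepSum j A B - j * (#A + #B - j)

lemma repCount_compl_add : repCount A Bᶜ c + repCount A B c = #A := by
  simpa [repCount, add_comm] using card_filter_add_card_filter_not (s := A) (fun a => c - a ∈ B)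

lemma card_dysonFst_compl_add : #(dysonFst e A Bᶜ) + #(dysonFst e A B) = #A := by
  simpa [dysonFst, add_comm] using card_filter_add_card_filter_not (s := A) (fun a => a - e ∈ B)

lemma card_compl_dysonSnd_compl_add : #(dysonSnd e A Bᶜ)ᶜ + #(dysonFst e A B) = #B := by
  have := card_dysonFst_add_card_dysonSnd (e := e) (A := A) (B := Bᶜ)
  have := (card_compl_add_card (dysonSnd e A Bᶜ)).trans (ZMod.card p)
  have := (card_compl_add_card B).trans (ZMod.card p)
  have := card_dysonFst_compl_add (e := e) (A := A) (B := B)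
  omega

lemma sum_repCount : ∑ c, repCount A B c = #A * #B := by
  simp only [repCount, card_filter]
  rw [sum_comm, ← smul_eq_mul, ← sum_const]
  refine sum_congr rfl fun a _ => ?_
  rw [← card_filter]
  exact card_equiv (Equiv.subRight a) (by simp)

lemma card_add_card_le_repCount : #A + #B ≤ p + repCount A B c := by
  have := (card_compl_add_card B).trans (ZMod.card p)
  have := repCount_compl_add (A := A) (B := B) (c := c)
  have := repCount_le_card_right (A := A) (B := Bᶜ) (c := c)
  omega

lemma truncRepSum_eq_mul_of_le_repCount (h : ∀ c, j ≤ repCount A B c) :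
    truncRepSum j A B = p * j := by
  simp [truncRepSum, min_eq_left (h _), ZMod.card]

lemma truncRepSum_eq_mul_of_card_add_card_le (h : p + j ≤ #A + #B) :
    truncRepSum j A B = p * j :=
  truncRepSum_eq_mul_of_le_repCount fun c => by
    have := card_add_card_le_repCount (A := A) (B := B) (c := c); omega

lemma truncRepSum_eq_card_mul_card (h : min #A #B ≤ j) :
    truncRepSum j A B = #A * #B := by
  rw [← sum_repCount, truncRepSum]
  exact sum_congr rfl fun c _ => min_eq_right <|
    (le_min repCount_le_card_left repCount_le_card_right).trans h

lemma truncRepSum_dyson_le : truncRepSum j (dysonFst e A B) (dysonSnd e A B) ≤ truncRepSum j A B :=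
  sum_le_sum fun _ _ => min_le_min_left j repCount_dyson_le

lemma truncRepSum_compl (hj : j ≤ #A) :
    truncRepSum j A B + p * #A = truncRepSum (#A - j) A Bᶜ + p * j + #A * #B := by
  have key : ∀ c, min j (repCount A B c) + #A
      = min (#A - j) (repCount A Bᶜ c) + j + repCount A B c := fun c => by
    have := repCount_le_card_left (A := A) (B := B) (c := c)
    have := repCount_compl_add (A := A) (B := B) (c := c)
    omega
  have := sum_congr rfl fun c (_ : c ∈ univ) => key c
  simp only [sum_add_distrib, sum_const, card_univ, ZMod.card, smul_eq_mul, sum_repCount] at this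
  rw [truncRepSum, truncRepSum]; linarith

lemma pollardDefect_compl (hj : j ≤ #A) : pollardDefect (#A - j) A Bᶜ = pollardDefect j A B := by
  have h : (truncRepSum j A B : ℤ) + p * #A = truncRepSum (#A - j) A Bᶜ + p * j + #A * #B :=
    mod_cast truncRepSum_compl hj
  have hB : (#Bᶜ : ℤ) = p - #B := by have := (card_compl_add_card B).trans (ZMod.card p); omega
  simp only [pollardDefect]
  push_cast [hj, hB]
  linear_combination -h

lemma pollardDefect_dyson_le :
    pollardDefect j (dysonFst e A B) (dysonSnd e A B) ≤ pollardDefect j A B := by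
  have h : (#(dysonFst e A B) : ℤ) + #(dysonSnd e A B) = #A + #B :=
    mod_cast card_dysonFst_add_card_dysonSnd
  simp only [pollardDefect, h]
  exact sub_le_sub_right (mod_cast truncRepSum_dyson_le) _

lemma pollardDefect_dual_le (hg : #(dysonFst e A B) ≤ j) (hj : j ≤ #A) :
    pollardDefect (j - #(dysonFst e A B)) (dysonFst e A Bᶜ) (dysonSnd e A Bᶜ)ᶜ
      ≤ pollardDefect j A B := by
  have hA' := card_dysonFst_compl_add (e := e) (A := A) (B := B)
  calc pollardDefect (j - #(dysonFst e A B)) (dysonFst e A Bᶜ) (dysonSnd e A Bᶜ)ᶜ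
      = pollardDefect (#A - j) (dysonFst e A Bᶜ) (dysonSnd e A Bᶜ) := by
        rw [← pollardDefect_compl (by omega), compl_compl]; congr 1; omega
    _ ≤ pollardDefect (#A - j) A Bᶜ := pollardDefect_dyson_le
    _ = pollardDefect j A B := pollardDefect_compl hj

lemma eq_univ_of_add_mem (hp : p.Prime) {d : ZMod p} (hd : d ≠ 0) (hB : B.Nonempty)
    (h : ∀ b ∈ B, b + d ∈ B) : B = univ := by
  have := Fact.mk hp
  obtain ⟨b, hb⟩ := hB
  have hmul : ∀ n : ℕ, b + n * d ∈ B := by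
    intro n
    induction n with
    | zero => simpa
    | succ n ih => simpa [add_mul, ← add_assoc] using h _ ih
  refine eq_univ_of_forall fun x => ?_
  simpa [hd] using hmul ((x - b) / d).val

lemma eq_univ_of_add_sub_mem (hp : p.Prime) (hA : 1 < #A) (hB : B.Nonempty)
    (h : ∀ a ∈ A, ∀ a' ∈ A, ∀ b ∈ B, b + (a' - a) ∈ B) : B = univ := by
  obtain ⟨a, ha, a', ha', hne⟩ := one_lt_card.mp hA
  exact eq_univ_of_add_mem hp (sub_ne_zero.mpr hne.symm) hB (h a ha a' ha')

lemma card_add_card_ge_of_rigid (hp : p.Prime) (hA : 1 < #A) (hB : 1 < #B)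
    (h : ∀ e, (dysonFst e A B).Nonempty → min #A #B ≤ #(dysonFst e A B)) :
    p + min #A #B ≤ #A + #B := by
  have hfull : ∀ a ∈ A, ∀ b ∈ B, min #A #B ≤ #(dysonFst (a - b) A B) := fun a ha b hb =>
    h _ ⟨a, by simpa [dysonFst, ha]⟩
  rcases le_total #A #B with hAB | hBA
  · have hBuniv : B = univ := eq_univ_of_add_sub_mem hp hA (card_pos.mp (by omega))
      fun a ha a' ha' b hb => by
        have hcard : #A ≤ #(dysonFst (a - b) A B) := min_eq_left hAB ▸ hfull a ha b hb
        have := filter_card_eq (hcard.antisymm' (card_filter_le _ _)) a' ha'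
        rwa [show a' - (a - b) = b + (a' - a) by ring] at this
    rw [hBuniv, card_univ, ZMod.card]; omega
  · have hAuniv : A = univ := eq_univ_of_add_sub_mem hp hB (card_pos.mp (by omega))
      fun b hb b' hb' a ha => by
        have hcard : #B ≤ #{x ∈ B | x + (a - b) ∈ A} := by
          rw [← card_dysonFst]; exact min_eq_right hBA ▸ hfull a ha b hb
        have := filter_card_eq (hcard.antisymm' (card_filter_le _ _)) b' hb'
        rwa [show b' + (a - b) = a + (b' - b) by ring] at this
    rw [hAuniv, card_univ, ZMod.card]; omega

theorem pollardDefect_nonneg (hp : p.Prime) (hjA : j ≤ #A) (hjB : j ≤ #B)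
    (hlt : #A + #B < p + j) : 0 ≤ pollardDefect j A B := by
  induction hs : #A using Nat.strong_induction_on generalizing A B j with
  | _ s ih =>
  subst hs
  obtain rfl | hj := j.eq_zero_or_pos
  · simp [pollardDefect]
  obtain hmin | hmin := (le_min hjA hjB).eq_or_lt
  · have : (0 : ℤ) ≤ (#A - j) * (#B - j) := mul_nonneg (by omega) (by omega)
    rw [pollardDefect, truncRepSum_eq_card_mul_card hmin.ge]
    push_cast
    linarith
  by_cases hdual : ∃ e, 0 < #(dysonFst e A B) ∧ #(dysonFst e A B) < j
  · obtain ⟨e, hg, hgj⟩ := hdual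
    have := card_dysonFst_compl_add (e := e) (A := A) (B := B)
    have := card_compl_dysonSnd_compl_add (e := e) (A := A) (B := B)
    exact (ih _ (by omega) (by omega) (by omega) (by omega) rfl).trans
      (pollardDefect_dual_le hgj.le hjA)
  by_cases hprimal : ∃ e, j ≤ #(dysonFst e A B) ∧ #(dysonFst e A B) < min #A #B
  · obtain ⟨e, hjg, hgmin⟩ := hprimal
    have := card_dysonFst_add_card_dysonSnd (e := e) (A := A) (B := B)
    have hjB' : j ≤ #(dysonSnd e A B) := hjB.trans (card_le_card subset_union_left)
    exact (ih _ (by omega) hjg hjB' (by omega) rfl).trans pollardDefect_dyson_le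
  push Not at hdual hprimal
  have := card_add_card_ge_of_rigid hp (A := A) (B := B) (by omega) (by omega) fun e he =>
    hprimal e (hdual e he.card_pos)
  omega

theorem mul_min_le_truncRepSum (hp : p.Prime) (hjA : j ≤ #A) (hjB : j ≤ #B) :
    j * min p (#A + #B - j) ≤ truncRepSum j A B := by
  rcases le_or_gt (p + j) (#A + #B) with h | h
  · rw [truncRepSum_eq_mul_of_card_add_card_le h, min_eq_left (by omega), mul_comm]
  · have := pollardDefect_nonneg hp hjA hjB h
    rw [pollardDefect] at this
    rw [min_eq_right (by omega)]
    zify [show j ≤ #A + #B by omega]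
    linarith

lemma truncRepSum_le_card_triples_add :
    truncRepSum j A B ≤ #{x ∈ A ×ˢ B ×ˢ B | x.2.2 = x.1 + x.2.1} + j * #Bᶜ := by
  rw [card_triples_eq_sum_repCount, truncRepSum, ← sum_add_sum_compl B]
  have hB : ∑ c ∈ B, min j (repCount A B c) ≤ ∑ c ∈ B, repCount A B c :=
    sum_le_sum fun _ _ => min_le_right _ _
  have hBc : ∑ c ∈ Bᶜ, min j (repCount A B c) ≤ j * #Bᶜ := by
    simpa [mul_comm] using sum_le_card_nsmul Bᶜ _ j fun _ _ => min_le_left _ _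
  omega

end Finite

end Pollard

theorem stmt_4_general {p : ℕ} [NeZero p] (hp : p.Prime) {s t : ℕ}
    (A B : Finset (ZMod p)) (hA : A.card = s) (hB : B.card = t)
    (j : ℕ) (hj2 : j ≤ min s t) :
    (j : ℤ) * min (p : ℤ) ((s : ℤ) + t - j) - (j : ℤ) * ((p : ℤ) - t)
      ≤ (((A ×ˢ B ×ˢ B).filter (fun x => x.2.2 = x.1 + x.2.1)).card : ℤ) := by
  subst hA hB
  have hjA : j ≤ #A := hj2.trans (min_le_left _ _)
  have h := (Pollard.mul_min_le_truncRepSum hp hjA (hj2.trans (min_le_right _ _))).trans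
    Pollard.truncRepSum_le_card_triples_add
  have hBc : (#Bᶜ : ℤ) = p - #B := by have := (card_compl_add_card B).trans (ZMod.card p); omega
  zify [show j ≤ #A + #B by omega] at h
  rw [hBc] at h
  linarith

/-- r(A,B,B) ≥ j·min(p, s+t−j) − j(p−t) for 1 ≤ j ≤ min(s,t). -/
theorem stmt_4 {p : ℕ} [NeZero p] (hp : p.Prime) {s t : ℕ} (hs : 1 ≤ s) (ht : 1 ≤ t)
    (A B : Finset (ZMod p)) (hA : A.card = s) (hB : B.card = t)
    (j : ℕ) (hj1 : 1 ≤ j) (hj2 : j ≤ min s t) :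
    (j : ℤ) * min (p : ℤ) ((s : ℤ) + t - j) - (j : ℤ) * ((p : ℤ) - t)
      ≤ (((A ×ˢ B ×ˢ B).filter (fun x => x.2.2 = x.1 + x.2.1)).card : ℤ) :=
  stmt_4_general hp A B hA hB j hj2
end

section
/- Let p be an odd prime, 1 ≤ s,t ≤ p−1, and let A, B be subsets of Z_p with |A| = s, |B| = t. If 2t ≥ p−s+2 and 2t ≤ p+s−2, then r(A,B,B) ≥ ⌊(s+2t−p)²/4⌋. -/
set_option linter.unusedSectionVars false

open Finset
open scoped Pointwise

namespace Stmt5Aux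

variable {p : ℕ} [NeZero p]

/-- `mu B y = |(B+y) \ B|`. -/
def mu (B : Finset (ZMod p)) (y : ZMod p) : ℕ := ((B.image (· + y)) \ B).card

/-- level count `h u = #{y : mu y ≤ u}`. -/
def lh (B : Finset (ZMod p)) (u : ℕ) : ℕ := (univ.filter fun y => mu B y ≤ u).card

noncomputable def rho (B : Finset (ZMod p)) (c : ℕ) : ℕ := sInf {u | 2 * c + 1 ≤ lh B u}

noncomputable def sig (B : Finset (ZMod p)) (C : ℕ) : ℕ := ∑ c ∈ Ioc 0 C, rho B c

lemma mem_shift {B : Finset (ZMod p)} {y x : ZMod p} :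
    x ∈ B.image (· + y) ↔ x - y ∈ B := by
  simp only [mem_image]
  constructor
  · rintro ⟨b, hb, rfl⟩; simpa using hb
  · intro h; exact ⟨x - y, h, by ring⟩

lemma card_shift (B : Finset (ZMod p)) (y : ZMod p) :
    (B.image (· + y)).card = B.card :=
  card_image_of_injective _ (add_left_injective y)

lemma mu_zero (B : Finset (ZMod p)) : mu B 0 = 0 := by
  simp [mu]

lemma shift_shift (B : Finset (ZMod p)) (y z : ZMod p) :
    (B.image (· + y)).image (· + z) = B.image (· + (y + z)) := by
  rw [image_image]
  congr 1
  funext x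
  simp [add_assoc]

lemma mu_add_le (B : Finset (ZMod p)) (y z : ZMod p) :
    mu B (y + z) ≤ mu B y + mu B z := by
  unfold mu
  have hsub : B.image (· + (y + z)) \ B ⊆
      ((B.image (· + (y + z))) \ (B.image (· + z))) ∪ ((B.image (· + z)) \ B) := by
    intro x hx
    simp only [mem_sdiff, mem_union] at hx ⊢
    by_cases h : x ∈ B.image (· + z)
    · exact Or.inr ⟨h, hx.2⟩
    · exact Or.inl ⟨hx.1, h⟩
  refine (card_le_card hsub).trans ((card_union_le _ _).trans ?_)
  have h1 : (B.image (· + (y + z))) \ (B.image (· + z)) =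
      ((B.image (· + y)) \ B).image (· + z) := by
    rw [image_sdiff _ _ (add_left_injective z), shift_shift]
  refine Nat.add_le_add (le_of_eq ?_) le_rfl
  rw [h1, card_image_of_injective _ (add_left_injective z)]

lemma card_inter_shift (B : Finset (ZMod p)) (y : ZMod p) :
    mu B y + ((B.image (· + y)) ∩ B).card = B.card := by
  rw [mu, card_sdiff_add_card_inter, card_shift]

lemma inter_shift_symm (B : Finset (ZMod p)) (y : ZMod p) :
    ((B.image (· + y)) ∩ B).card = ((B.image (· + (-y))) ∩ B).card := by
  have h : ((B.image (· + y)) ∩ B).image (· + (-y)) =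
      B ∩ (B.image (· + (-y))) := by
    rw [image_inter _ _ (add_left_injective (-y)), shift_shift]
    simp
  calc ((B.image (· + y)) ∩ B).card
      = (((B.image (· + y)) ∩ B).image (· + (-y))).card :=
        (card_image_of_injective _ (add_left_injective (-y))).symm
    _ = (B ∩ (B.image (· + (-y)))).card := by rw [h]
    _ = ((B.image (· + (-y))) ∩ B).card := by rw [inter_comm]

lemma mu_neg (B : Finset (ZMod p)) (y : ZMod p) : mu B (-y) = mu B y := by
  have h1 := card_inter_shift B y
  have h2 := card_inter_shift B (-y)
  have h3 := inter_shift_symm B y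
  omega

lemma mu_le_card (B : Finset (ZMod p)) (y : ZMod p) : mu B y ≤ B.card := by
  have : mu B y ≤ (B.image (· + y)).card := card_le_card (sdiff_subset)
  rwa [card_shift] at this

lemma mu_le_compl (B : Finset (ZMod p)) (y : ZMod p) : mu B y ≤ p - B.card := by
  have hsub : (B.image (· + y)) \ B ⊆ univ \ B := sdiff_subset_sdiff (subset_univ _) le_rfl
  have := card_le_card hsub
  rw [card_sdiff_of_subset (subset_univ _), card_univ, ZMod.card] at this
  exact this

lemma mu_pos (hp : p.Prime) {B : Finset (ZMod p)} (hBne : B.Nonempty)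
    (hBcard : B.card ≤ p - 1) {y : ZMod p} (hy : y ≠ 0) : 1 ≤ mu B y := by
  by_contra h
  have h0 : mu B y = 0 := by omega
  have hsub : B.image (· + y) ⊆ B := by
    have he : (B.image (· + y)) \ B = ∅ := card_eq_zero.mp h0
    exact sdiff_eq_empty_iff_subset.mp he
  have heq : B.image (· + y) = B :=
    eq_of_subset_of_card_le hsub (by rw [card_shift])
  have hstep : ∀ b ∈ B, b + y ∈ B := by
    intro b hb
    rw [← heq]
    exact mem_image_of_mem _ hb
  obtain ⟨b0, hb0⟩ := hBne
  have hn : ∀ n : ℕ, b0 + (n : ZMod p) * y ∈ B := by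
    intro n
    induction n with
    | zero => simpa using hb0
    | succ n ih =>
      have := hstep _ ih
      have he : b0 + (n : ZMod p) * y + y = b0 + ((n + 1 : ℕ) : ZMod p) * y := by
        push_cast; ring
      rwa [he] at this
  have hall : B = univ := by
    refine eq_univ_of_forall fun z => ?_
    haveI : Fact p.Prime := ⟨hp⟩
    set c : ZMod p := (z - b0) * y⁻¹ with hc
    have hcy : c * y = z - b0 := by
      rw [hc, mul_assoc, inv_mul_cancel₀ hy, mul_one]
    have := hn c.val
    rw [ZMod.natCast_rightInverse c, hcy] at this
    simpa using this
  have : B.card = p := by rw [hall, card_univ, ZMod.card]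
  have hp1 : 1 ≤ p := hp.one_lt.le
  omega

lemma mu_sum (B : Finset (ZMod p)) :
    ∑ y : ZMod p, mu B y = B.card * (p - B.card) := by
  have h1 : ∀ y : ZMod p, mu B y =
      ∑ x : ZMod p, if x - y ∈ B ∧ x ∉ B then 1 else 0 := by
    intro y
    rw [mu]
    have : (B.image (· + y)) \ B = univ.filter fun x => x - y ∈ B ∧ x ∉ B := by
      ext x
      simp [mem_sdiff, mem_shift, mem_filter, sub_eq_add_neg]
    rw [this, card_filter]
  calc ∑ y : ZMod p, mu B y
      = ∑ y : ZMod p, ∑ x : ZMod p, if x - y ∈ B ∧ x ∉ B then 1 else 0 := by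
        exact Finset.sum_congr rfl fun y _ => h1 y
    _ = ∑ x : ZMod p, ∑ y : ZMod p, if x - y ∈ B ∧ x ∉ B then 1 else 0 :=
        Finset.sum_comm
    _ = ∑ x : ZMod p, if x ∉ B then B.card else 0 := by
        refine Finset.sum_congr rfl fun x _ => ?_
        by_cases hx : x ∈ B
        · simp [hx]
        · simp only [hx, not_false_iff, and_true, if_true]
          have : (∑ y : ZMod p, if x - y ∈ B then 1 else 0) = B.card := by
            rw [← card_filter]
            refine card_bij (fun y _ => x - y) ?_ ?_ ?_
            · intro y hy; simpa using (mem_filter.mp hy).2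
            · intro a ha b hb hab
              have : x - a = x - b := hab
              have := sub_right_injective this
              exact this
            · intro b hb
              refine ⟨x - b, ?_, by ring⟩
              simp only [mem_filter, mem_univ, true_and]
              simpa using hb
          rw [← this]
    _ = ∑ _x ∈ univ.filter (fun x : ZMod p => x ∉ B), B.card :=
        (sum_filter _ _).symm
    _ = (univ.filter fun x : ZMod p => x ∉ B).card * B.card := by
        rw [sum_const, smul_eq_mul]
    _ = (p - B.card) * B.card := by
        congr 1
        have := card_filter_add_card_filter_not (s := (univ : Finset (ZMod p)))
          (p := fun x => x ∈ B)
        simp only [filter_mem_eq_inter, univ_inter] at this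
        have hcu : (univ : Finset (ZMod p)).card = p := by rw [card_univ, ZMod.card]
        omega
    _ = B.card * (p - B.card) := Nat.mul_comm _ _

lemma lh_mono (B : Finset (ZMod p)) {u v : ℕ} (huv : u ≤ v) : lh B u ≤ lh B v := by
  refine card_le_card (fun y hy => ?_)
  simp only [mem_filter, mem_univ, true_and] at hy ⊢
  omega

lemma lh_le (B : Finset (ZMod p)) (u : ℕ) : lh B u ≤ p := by
  have := card_le_card (filter_subset (fun y => mu B y ≤ u) (univ : Finset (ZMod p)))
  rwa [card_univ, ZMod.card] at this

lemma lh_full (B : Finset (ZMod p)) {u : ℕ} (hu : min B.card (p - B.card) ≤ u) :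
    lh B u = p := by
  have : (univ.filter fun y => mu B y ≤ u) = univ := by
    refine filter_true_of_mem fun y _ => ?_
    have h1 := mu_le_card B y
    have h2 := mu_le_compl B y
    omega
  rw [lh, this, card_univ, ZMod.card]

lemma two_ne_zero' (hp : p.Prime) (hodd : Odd p) : (2 : ZMod p) ≠ 0 := by
  intro h
  have h2 : ((2 : ℕ) : ZMod p) = 0 := by exact_mod_cast h
  have hdvd : p ∣ 2 := (ZMod.natCast_eq_zero_iff 2 p).mp h2
  have := Nat.le_of_dvd (by norm_num) hdvd
  have h2le := hp.two_le
  have : p = 2 := by omega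
  rw [this, Nat.odd_iff] at hodd
  omega

lemma even_card_neg_closed (hp : p.Prime) (hodd : Odd p) :
    ∀ T : Finset (ZMod p), (0 : ZMod p) ∉ T → (∀ x ∈ T, -x ∈ T) → Even T.card := by
  haveI : Fact p.Prime := ⟨hp⟩
  intro T
  induction T using Finset.strongInduction with
  | _ T ih =>
    intro h0 hneg
    rcases T.eq_empty_or_nonempty with rfl | ⟨x, hx⟩
    · simp
    · have hxn : -x ∈ T := hneg x hx
      have hx0 : x ≠ 0 := fun h => h0 (h ▸ hx)
      have hne : -x ≠ x := by
        intro h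
        have hxx : x + x = 0 := by
          nth_rewrite 1 [← h]
          ring
        have h2 : (2 : ZMod p) * x = 0 := by rw [two_mul]; exact hxx
        rcases mul_eq_zero.mp h2 with h2 | h2
        · exact two_ne_zero' hp hodd h2
        · exact hx0 h2
      set T' := (T.erase x).erase (-x) with hT'
      have hsub : T' ⊂ T :=
        (erase_subset _ _).trans_ssubset (erase_ssubset hx)
      have hmemerase : -x ∈ T.erase x := mem_erase.mpr ⟨hne, hxn⟩
      have hcard : T'.card + 2 = T.card := by
        rw [hT', card_erase_of_mem hmemerase, card_erase_of_mem hx]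
        have h1 : 1 ≤ T.card := card_pos.mpr ⟨x, hx⟩
        have h2 : 2 ≤ T.card := by
          have hsub2 : ({x, -x} : Finset (ZMod p)) ⊆ T := by
            intro z hz
            rcases mem_insert.mp hz with rfl | hz
            · exact hx
            · rw [mem_singleton.mp hz]; exact hxn
          have := card_le_card hsub2
          rwa [card_insert_of_notMem (by simpa using hne.symm), card_singleton] at this
        omega
      have h0' : (0 : ZMod p) ∉ T' := fun h =>
        h0 (mem_of_mem_erase (mem_of_mem_erase h))
      have hneg' : ∀ z ∈ T', -z ∈ T' := by
        intro z hz
        have hzT : z ∈ T := mem_of_mem_erase (mem_of_mem_erase hz)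
        have h1 : z ≠ -x := (mem_erase.mp hz).1
        have h2 : z ≠ x := (mem_erase.mp (mem_of_mem_erase hz)).1
        refine mem_erase.mpr ⟨fun h => h2 (neg_injective h), mem_erase.mpr ⟨?_, hneg z hzT⟩⟩
        intro h
        exact h1 (by rw [← h]; ring)
      have heven := ih T' hsub h0' hneg'
      rw [Nat.even_iff] at heven ⊢
      omega

lemma lh_odd (hp : p.Prime) (hodd : Odd p) (B : Finset (ZMod p)) (u : ℕ) :
    Odd (lh B u) := by
  classical
  set S := univ.filter fun y => mu B y ≤ u with hS
  have h0 : (0 : ZMod p) ∈ S := by simp [hS, mu_zero]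
  have heven : Even (S.erase 0).card := by
    refine even_card_neg_closed hp hodd _ (notMem_erase _ _) ?_
    intro x hx
    have hxS : x ∈ S := mem_of_mem_erase hx
    have hx0 : x ≠ 0 := (mem_erase.mp hx).1
    refine mem_erase.mpr ⟨neg_ne_zero.mpr hx0, ?_⟩
    simp only [hS, mem_filter, mem_univ, true_and] at hxS ⊢
    rwa [mu_neg]
  have hcard : (S.erase 0).card + 1 = S.card := by
    rw [card_erase_of_mem h0]
    have : 1 ≤ S.card := card_pos.mpr ⟨0, h0⟩
    omega
  have : lh B u = S.card := rfl
  rw [Nat.even_iff] at heven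
  rw [Nat.odd_iff, this]
  omega

lemma level_add_subset (B : Finset (ZMod p)) (u v : ℕ) :
    (univ.filter fun y => mu B y ≤ u) + (univ.filter fun y => mu B y ≤ v) ⊆
      univ.filter fun y => mu B y ≤ u + v := by
  intro z hz
  rw [Finset.mem_add] at hz
  obtain ⟨a, ha, b, hb, rfl⟩ := hz
  simp only [mem_filter, mem_univ, true_and] at ha hb ⊢
  exact (mu_add_le B a b).trans (Nat.add_le_add ha hb)

lemma lh_cd (hp : p.Prime) (B : Finset (ZMod p)) (u v : ℕ) :
    min p (lh B u + lh B v - 1) ≤ lh B (u + v) := by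
  have hne : ∀ w : ℕ, (univ.filter fun y => mu B y ≤ w).Nonempty := by
    intro w
    exact ⟨0, by simp [mu_zero]⟩
  have h1 := ZMod.cauchy_davenport hp (hne u) (hne v)
  exact h1.trans (card_le_card (level_add_subset B u v))

lemma rho_nonempty (B : Finset (ZMod p)) {c : ℕ} (hc : 2 * c + 1 ≤ p) :
    {u | 2 * c + 1 ≤ lh B u}.Nonempty :=
  ⟨min B.card (p - B.card), by simp only [Set.mem_setOf_eq, lh_full B le_rfl]; exact hc⟩

lemma lh_rho (B : Finset (ZMod p)) {c : ℕ} (hc : 2 * c + 1 ≤ p) :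
    2 * c + 1 ≤ lh B (rho B c) :=
  Nat.sInf_mem (rho_nonempty B hc)

lemma rho_le_iff (B : Finset (ZMod p)) {c u : ℕ} (hc : 2 * c + 1 ≤ p) :
    rho B c ≤ u ↔ 2 * c + 1 ≤ lh B u := by
  constructor
  · intro h
    exact (lh_rho B hc).trans (lh_mono B h)
  · intro h
    exact Nat.sInf_le h

lemma rho_le_omega (B : Finset (ZMod p)) {c : ℕ} (hc : 2 * c + 1 ≤ p) :
    rho B c ≤ min B.card (p - B.card) := by
  rw [rho_le_iff B hc, lh_full B le_rfl]
  exact hc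

lemma rho_subadd (hp : p.Prime) (B : Finset (ZMod p)) {a b : ℕ}
    (hab : 2 * (a + b) + 1 ≤ p) :
    rho B (a + b) ≤ rho B a + rho B b := by
  rw [rho_le_iff B hab]
  have hcd := lh_cd hp B (rho B a) (rho B b)
  have ha := lh_rho B (show 2 * a + 1 ≤ p by omega)
  have hb := lh_rho B (show 2 * b + 1 ≤ p by omega)
  omega

/-- `mlv B u = (lh B u - 1)/2`. -/
def mlv (B : Finset (ZMod p)) (u : ℕ) : ℕ := (lh B u - 1) / 2

lemma lh_eq_mlv (hp : p.Prime) (hodd : Odd p) (B : Finset (ZMod p)) (u : ℕ) :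
    lh B u = 2 * mlv B u + 1 := by
  have := lh_odd hp hodd B u
  rw [Nat.odd_iff] at this
  unfold mlv
  omega

lemma count_rho_le (hp : p.Prime) (hodd : Odd p) (B : Finset (ZMod p)) {C : ℕ} (u : ℕ)
    (hC : 2 * C + 1 ≤ p) :
    ((Ioc 0 C).filter fun c => rho B c ≤ u).card = min C (mlv B u) := by
  have heq : ((Ioc 0 C).filter fun c => rho B c ≤ u) = Ioc 0 (min C (mlv B u)) := by
    ext c
    simp only [mem_filter, mem_Ioc]
    constructor
    · rintro ⟨⟨hc0, hcC⟩, hrho⟩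
      have h1 := (rho_le_iff B (show 2 * c + 1 ≤ p by omega)).mp hrho
      rw [lh_eq_mlv hp hodd B u] at h1
      omega
    · rintro ⟨hc0, hcm⟩
      have hcC : c ≤ C := le_trans hcm (min_le_left _ _)
      have hcm' : c ≤ mlv B u := le_trans hcm (min_le_right _ _)
      refine ⟨⟨hc0, hcC⟩, ?_⟩
      rw [rho_le_iff B (show 2 * c + 1 ≤ p by omega), lh_eq_mlv hp hodd B u]
      omega
  rw [heq, Nat.card_Ioc]
  omega

lemma sum_card_comm {α β : Type*} (s : Finset α) (t : Finset β) (P : α → β → Prop)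
    [∀ a b, Decidable (P a b)] :
    ∑ a ∈ s, (t.filter fun b => P a b).card = ∑ b ∈ t, (s.filter fun a => P a b).card := by
  simp_rw [card_filter]
  exact Finset.sum_comm

lemma sum_mu_eq (B : Finset (ZMod p)) (X : Finset (ZMod p)) :
    ∑ x ∈ X, mu B x =
      ∑ u ∈ range (min B.card (p - B.card)), (X.filter fun x => ¬ mu B x ≤ u).card := by
  have h1 : ∀ x ∈ X, mu B x =
      ((range (min B.card (p - B.card))).filter fun u => ¬ mu B x ≤ u).card := by
    intro x _
    have hle : mu B x ≤ min B.card (p - B.card) :=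
      le_min (mu_le_card B x) (mu_le_compl B x)
    have : ((range (min B.card (p - B.card))).filter fun u => ¬ mu B x ≤ u)
        = range (mu B x) := by
      ext u
      simp only [mem_filter, mem_range, not_le]
      omega
    rw [this, card_range]
  rw [Finset.sum_congr rfl h1]
  exact sum_card_comm X (range (min B.card (p - B.card))) (fun x u => ¬ mu B x ≤ u)

lemma sum_min_rho (hp : p.Prime) (hodd : Odd p) (B : Finset (ZMod p)) {C : ℕ}
    (hC : 2 * C + 1 ≤ p) :
    ∑ u ∈ range (min B.card (p - B.card)), (C - min C (mlv B u)) = sig B C := by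
  have h1 : ∀ u, C - min C (mlv B u) = ((Ioc 0 C).filter fun c => ¬ rho B c ≤ u).card := by
    intro u
    have hcnt := count_rho_le hp hodd B u hC
    have h2 := card_filter_add_card_filter_not (s := Ioc 0 C)
      (p := fun c => rho B c ≤ u)
    rw [Nat.card_Ioc] at h2
    omega
  rw [Finset.sum_congr rfl (fun u _ => h1 u),
    sum_card_comm (range (min B.card (p - B.card))) (Ioc 0 C) (fun u c => ¬ rho B c ≤ u)]
  refine Finset.sum_congr rfl fun c hc => ?_
  have hcC : c ≤ C := (mem_Ioc.mp hc).2
  have hrle : rho B c ≤ min B.card (p - B.card) :=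
    rho_le_omega B (show 2 * c + 1 ≤ p by omega)
  have : ((range (min B.card (p - B.card))).filter fun u => ¬ rho B c ≤ u)
      = range (rho B c) := by
    ext u
    simp only [mem_filter, mem_range, not_le]
    omega
  rw [this, card_range]

lemma mass (hp : p.Prime) (hodd : Odd p) (B : Finset (ZMod p)) :
    2 * sig B (p / 2) = B.card * (p - B.card) := by
  have hP : p = 2 * (p / 2) + 1 := by
    have := Nat.odd_iff.mp hodd
    omega
  have h1 : ∑ y : ZMod p, mu B y
      = ∑ u ∈ range (min B.card (p - B.card)), (p - lh B u) := by
    rw [sum_mu_eq B univ]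
    refine Finset.sum_congr rfl fun u _ => ?_
    have h2 := card_filter_add_card_filter_not
      (s := (univ : Finset (ZMod p))) (p := fun x => mu B x ≤ u)
    have hcu : (univ : Finset (ZMod p)).card = p := by rw [card_univ, ZMod.card]
    have hlh : (univ.filter fun x => mu B x ≤ u).card = lh B u := rfl
    omega
  have h2 : ∀ u, p - lh B u = 2 * (p / 2 - min (p / 2) (mlv B u)) := by
    intro u
    have hm := lh_eq_mlv hp hodd B u
    have hle := lh_le B u
    have hmin : min (p / 2) (mlv B u) = mlv B u := by
      apply min_eq_right
      omega
    rw [hmin]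
    omega
  have h3 := sum_min_rho hp hodd B (C := p / 2) (by omega)
  calc 2 * sig B (p / 2)
      = 2 * ∑ u ∈ range (min B.card (p - B.card)), (p / 2 - min (p / 2) (mlv B u)) := by
        rw [h3]
    _ = ∑ u ∈ range (min B.card (p - B.card)), 2 * (p / 2 - min (p / 2) (mlv B u)) := by
        rw [Finset.mul_sum]
    _ = ∑ u ∈ range (min B.card (p - B.card)), (p - lh B u) := by
        exact Finset.sum_congr rfl fun u _ => (h2 u).symm
    _ = ∑ y : ZMod p, mu B y := h1.symm
    _ = B.card * (p - B.card) := mu_sum B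

lemma sig_top (hp : p.Prime) (hodd : Odd p) (B : Finset (ZMod p))
    (hB1 : 1 ≤ B.card) (hB2 : B.card ≤ p - 1) :
    (min B.card (p - B.card)) * (min B.card (p - B.card) - 1)
      ≤ 2 * sig B (min B.card (p - B.card) - 1) := by
  set ω := min B.card (p - B.card) with hωdef
  set P := p / 2 with hPdef
  have hP : p = 2 * P + 1 := by
    have := Nat.odd_iff.mp hodd
    omega
  have htp' : B.card ≤ p := by
    have := card_le_card (subset_univ B)
    rwa [card_univ, ZMod.card] at this
  have hω1 : ω ≤ B.card := min_le_left _ _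
  have hω2 : ω ≤ p - B.card := min_le_right _ _
  have hωpos : 1 ≤ ω := by
    rw [hωdef]
    exact le_min hB1 (by omega)
  have hωP : ω ≤ P := by omega
  have hsplit := Finset.sum_Ioc_consecutive (rho B) (Nat.zero_le (ω - 1))
    (show ω - 1 ≤ P by omega)
  have htail : ∑ c ∈ Ioc (ω - 1) P, rho B c ≤ (P - (ω - 1)) * ω := by
    refine le_trans (Finset.sum_le_card_nsmul _ _ ω ?_) ?_
    · intro c hc
      have hcP : c ≤ P := (mem_Ioc.mp hc).2
      exact rho_le_omega B (show 2 * c + 1 ≤ p by omega)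
    · rw [Nat.card_Ioc, smul_eq_mul]
  have hmass := mass hp hodd B
  have htp : B.card * (p - B.card) = ω * (p - ω) := by
    rcases Nat.le_total B.card (p - B.card) with h | h
    · rw [hωdef, min_eq_left h]
    · rw [hωdef, min_eq_right h]
      have he : p - (p - B.card) = B.card := by omega
      rw [he, Nat.mul_comm]
  -- abbreviations
  obtain ⟨W, hW⟩ : ∃ W, ω = W + 1 := ⟨ω - 1, by omega⟩
  have hω1' : ω - 1 = W := by omega
  have key : 2 * sig B W + 2 * (∑ c ∈ Ioc W P, rho B c)
      = (W + 1) * W + 2 * ((P - W) * (W + 1)) := by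
    have h1 : sig B W + (∑ c ∈ Ioc W P, rho B c) = sig B P := by
      rw [← hω1']; exact hsplit
    have h2 : 2 * sig B P = ω * (p - ω) := by rw [hmass, htp]
    have h3 : ω * (p - ω) = (W + 1) * (2 * (P - W) + W) := by
      rw [hW]
      congr 1
      omega
    have h4 : (W + 1) * (2 * (P - W) + W) = (W + 1) * W + 2 * ((P - W) * (W + 1)) := by
      ring
    calc 2 * sig B W + 2 * (∑ c ∈ Ioc W P, rho B c)
        = 2 * (sig B W + (∑ c ∈ Ioc W P, rho B c)) := by ring
      _ = 2 * sig B P := by rw [h1]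
      _ = ω * (p - ω) := h2
      _ = (W + 1) * W + 2 * ((P - W) * (W + 1)) := by rw [h3, h4]
  have htail2 : 2 * (∑ c ∈ Ioc W P, rho B c) ≤ 2 * ((P - W) * (W + 1)) := by
    rw [hω1', hW] at htail
    omega
  rw [hW, Nat.add_sub_cancel]
  omega

lemma sig_prefix (hp : p.Prime) (hodd : Odd p) (B : Finset (ZMod p))
    (hB1 : 1 ≤ B.card) (hB2 : B.card ≤ p - 1) :
    ∀ d C, C + d = min B.card (p - B.card) - 1 → C * (C + 1) ≤ 2 * sig B C := by
  have hP : p = 2 * (p / 2) + 1 := by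
    have := Nat.odd_iff.mp hodd
    omega
  have htp' : B.card ≤ p := by
    have := card_le_card (subset_univ B)
    rwa [card_univ, ZMod.card] at this
  have hωP : min B.card (p - B.card) ≤ p / 2 := by
    have h1 : min B.card (p - B.card) ≤ B.card := min_le_left _ _
    have h2 : min B.card (p - B.card) ≤ p - B.card := min_le_right _ _
    omega
  intro d
  induction d with
  | zero =>
    intro C hC
    have hC' : C = min B.card (p - B.card) - 1 := by omega
    subst hC'
    have := sig_top hp hodd B hB1 hB2
    have hωpos : 1 ≤ min B.card (p - B.card) := le_min hB1 (by omega)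
    have he : (min B.card (p - B.card) - 1) + 1 = min B.card (p - B.card) := by omega
    rw [he]
    calc (min B.card (p - B.card) - 1) * min B.card (p - B.card)
        = min B.card (p - B.card) * (min B.card (p - B.card) - 1) := Nat.mul_comm _ _
      _ ≤ 2 * sig B (min B.card (p - B.card) - 1) := this
  | succ d ih =>
    intro C hC
    have hIH := ih (C + 1) (by omega)
    have hC1ω : C + 1 ≤ min B.card (p - B.card) - 1 := by omega
    have hCp : 2 * (C + 1) + 1 ≤ p := by omega
    rcases Nat.le_total (rho B (C + 1)) (C + 1) with h | h
    · have hsum : sig B (C + 1) = sig B C + rho B (C + 1) :=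
        Finset.sum_Ioc_succ_top (Nat.zero_le C) _
      nlinarith [hIH, hsum, h]
    · -- pairing case
      have hrefl : ∑ c ∈ Ioc 0 C, rho B (C + 1 - c) = sig B C := by
        rw [sig]
        refine Finset.sum_nbij' (i := fun c => C + 1 - c) (j := fun c => C + 1 - c)
          ?_ ?_ ?_ ?_ ?_
        · intro a ha
          rw [mem_Ioc] at ha ⊢
          omega
        · intro a ha
          rw [mem_Ioc] at ha ⊢
          omega
        · intro a ha
          rw [mem_Ioc] at ha
          omega
        · intro a ha
          rw [mem_Ioc] at ha
          omega
        · intro a ha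
          rfl
      have hpair : ∀ c ∈ Ioc 0 C, C + 1 ≤ rho B c + rho B (C + 1 - c) := by
        intro c hc
        rw [mem_Ioc] at hc
        have hsb := rho_subadd hp B (a := c) (b := C + 1 - c)
          (by rw [show c + (C + 1 - c) = C + 1 by omega]; exact hCp)
        rw [show c + (C + 1 - c) = C + 1 by omega] at hsb
        omega
      have hsum : (Ioc 0 C).card • (C + 1) ≤
          ∑ c ∈ Ioc 0 C, (rho B c + rho B (C + 1 - c)) :=
        Finset.card_nsmul_le_sum _ _ _ hpair
      rw [Finset.sum_add_distrib, hrefl, Nat.card_Ioc, smul_eq_mul, Nat.sub_zero] at hsum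
      have hsig : sig B C = ∑ c ∈ Ioc 0 C, rho B c := rfl
      omega

lemma sum_mu_lower (hp : p.Prime) (hodd : Odd p) (B : Finset (ZMod p))
    (hB1 : 1 ≤ B.card) (hB2 : B.card ≤ p - 1) (X : Finset (ZMod p))
    (hX : X.card + 2 ≤ 2 * min B.card (p - B.card)) :
    X.card * X.card / 4 ≤ ∑ x ∈ X, mu B x := by
  set ω := min B.card (p - B.card) with hωdef
  set k := X.card with hkdef
  have hP : p = 2 * (p / 2) + 1 := by
    have := Nat.odd_iff.mp hodd
    omega
  have htp' : B.card ≤ p := by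
    have := card_le_card (subset_univ B)
    rwa [card_univ, ZMod.card] at this
  have hωP : ω ≤ p / 2 := by
    have h1 : ω ≤ B.card := min_le_left _ _
    have h2 : ω ≤ p - B.card := min_le_right _ _
    omega
  rcases Nat.eq_zero_or_pos k with hk0 | hk1
  · rw [hk0]
    simp
  set C2 := (k - 1) / 2 with hC2def
  set C1 := k - 1 - C2 with hC1def
  have hCs : C1 + C2 = k - 1 ∧ C2 ≤ C1 ∧ C1 ≤ C2 + 1 := by
    refine ⟨by omega, by omega, by omega⟩
  have hC1ω : C1 + 1 ≤ ω := by omega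
  have hC1p : 2 * C1 + 1 ≤ p := by omega
  have hC2p : 2 * C2 + 1 ≤ p := by omega
  -- lower bound the sum by level counts
  have hsum := sum_mu_eq B X
  have hge : ∀ u ∈ range ω, (C1 - min C1 (mlv B u)) + (C2 - min C2 (mlv B u))
      ≤ (X.filter fun x => ¬ mu B x ≤ u).card := by
    intro u _
    have h1 := card_filter_add_card_filter_not (s := X) (p := fun x => mu B x ≤ u)
    have h2 : (X.filter fun x => mu B x ≤ u).card ≤ lh B u :=
      card_le_card (fun y hy => mem_filter.mpr ⟨mem_univ y, (mem_filter.mp hy).2⟩)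
    have h3 := lh_eq_mlv hp hodd B u
    rcases Nat.le_total (mlv B u) C2 with hm | hm
    · rw [min_eq_right hm, min_eq_right (by omega : mlv B u ≤ C1)]
      omega
    · rcases Nat.le_total (mlv B u) C1 with hm' | hm'
      · rw [min_eq_right hm', min_eq_left hm]
        omega
      · rw [min_eq_left hm', min_eq_left hm]
        omega
  have hlow : sig B C1 + sig B C2 ≤ ∑ x ∈ X, mu B x := by
    rw [hsum]
    calc sig B C1 + sig B C2
        = (∑ u ∈ range ω, (C1 - min C1 (mlv B u)))
          + ∑ u ∈ range ω, (C2 - min C2 (mlv B u)) := by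
          rw [sum_min_rho hp hodd B hC1p, sum_min_rho hp hodd B hC2p]
      _ = ∑ u ∈ range ω, ((C1 - min C1 (mlv B u)) + (C2 - min C2 (mlv B u))) :=
          (Finset.sum_add_distrib).symm
      _ ≤ ∑ u ∈ range ω, (X.filter fun x => ¬ mu B x ≤ u).card :=
          Finset.sum_le_sum hge
  have hpre1 : C1 * (C1 + 1) ≤ 2 * sig B C1 :=
    sig_prefix hp hodd B hB1 hB2 (ω - 1 - C1) C1 (by omega)
  have hpre2 : C2 * (C2 + 1) ≤ 2 * sig B C2 :=
    sig_prefix hp hodd B hB1 hB2 (ω - 1 - C2) C2 (by omega)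
  have hkk : k * k ≤ 4 * (sig B C1 + sig B C2) + 1 := by
    have hk' : k = C1 + C2 + 1 := by omega
    nlinarith [hpre1, hpre2, sq_nonneg ((C1 : ℤ) - C2), hCs.2.1, hCs.2.2]
  omega

lemma count_eq (B A : Finset (ZMod p)) :
    ((A ×ˢ B ×ˢ B).filter fun x : ZMod p × ZMod p × ZMod p => x.2.2 = x.1 + x.2.1).card
      = ∑ a ∈ A, (B.card - mu B a) := by
  rw [card_filter, Finset.sum_product]
  refine Finset.sum_congr rfl fun a _ => ?_
  rw [Finset.sum_product]
  have h1 : ∀ b : ZMod p, (∑ c ∈ B, if c = a + b then 1 else 0)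
      = if a + b ∈ B then 1 else 0 :=
    fun b => Finset.sum_ite_eq' B (a + b) (fun _ => (1 : ℕ))
  rw [Finset.sum_congr rfl fun b _ => h1 b, ← card_filter]
  have him : ((B.filter fun b => a + b ∈ B).image (· + a)) = (B.image (· + a)) ∩ B := by
    ext x
    simp only [mem_image, mem_filter, mem_inter]
    constructor
    · rintro ⟨b, ⟨hbB, hab⟩, rfl⟩
      refine ⟨⟨b, hbB, rfl⟩, ?_⟩
      rwa [add_comm b a]
    · rintro ⟨⟨b, hbB, rfl⟩, hx2⟩
      exact ⟨b, ⟨hbB, by rwa [add_comm a b]⟩, rfl⟩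
  have hint := card_inter_shift B a
  have hcard : (B.filter fun b => a + b ∈ B).card = ((B.image (· + a)) ∩ B).card := by
    rw [← him, card_image_of_injective _ (add_left_injective a)]
  omega

end Stmt5Aux

open Stmt5Aux in
theorem stmt_5 {p : ℕ} [NeZero p] (hp : p.Prime) (hodd : Odd p) {s t : ℕ}
    (hs1 : 1 ≤ s) (hs2 : s ≤ p - 1) (ht1 : 1 ≤ t) (ht2 : t ≤ p - 1)
    (A B : Finset (ZMod p)) (hA : A.card = s) (hB : B.card = t)
    (h1 : (p : ℤ) - s + 2 ≤ 2 * t) (h2 : 2 * (t : ℤ) ≤ p + s - 2) :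
    ((s : ℤ) + 2 * t - p) ^ 2 / 4
      ≤ (((A ×ˢ B ×ˢ B).filter (fun x => x.2.2 = x.1 + x.2.1)).card : ℤ) := by
  classical
  have hp2 : 2 ≤ p := hp.two_le
  have hsp : s ≤ p := by omega
  have htp : t ≤ p := by omega
  set k := p - s with hkdef
  have hk1 : 1 ≤ k := by omega
  have hk2 : k + 2 ≤ 2 * t := by omega
  have hk3 : k + 2 ≤ 2 * (p - t) := by omega
  have hkω : k + 2 ≤ 2 * min t (p - t) := by
    rcases Nat.le_total t (p - t) with h | h
    · rw [min_eq_left h]; exact hk2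
    · rw [min_eq_right h]; exact hk3
  -- the complement of A
  have hXcard : Aᶜ.card = k := by
    rw [card_compl, Fintype.card_eq_nat_card, Nat.card_zmod, hA]
  have hmuX : k * k / 4 ≤ ∑ x ∈ Aᶜ, mu B x := by
    have := sum_mu_lower hp hodd B (by omega : 1 ≤ B.card)
      (by omega : B.card ≤ p - 1) Aᶜ (by rw [hXcard, hB]; exact hkω)
    rwa [hXcard] at this
  have hcount := count_eq B A
  have hsum_univ := mu_sum B
  have hcompl := Finset.sum_add_sum_compl A (mu B)
  -- cast everything to ℤ
  have hmule : ∀ a : ZMod p, mu B a ≤ t := fun a => by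
    have := mu_le_card B a
    omega
  have hcount' : ((((A ×ˢ B ×ˢ B).filter
      (fun x => x.2.2 = x.1 + x.2.1)).card : ℤ))
      = (s : ℤ) * t - ∑ a ∈ A, (mu B a : ℤ) := by
    rw [hcount, hB, Nat.cast_sum]
    have he : ∀ a ∈ A, ((t - mu B a : ℕ) : ℤ) = (t : ℤ) - (mu B a : ℤ) :=
      fun a _ => by
        rw [Nat.cast_sub (hmule a)]
    rw [Finset.sum_congr rfl he, Finset.sum_sub_distrib, Finset.sum_const, hA,
      nsmul_eq_mul]
  have hcompl' : (∑ a ∈ A, (mu B a : ℤ)) + (∑ x ∈ Aᶜ, (mu B x : ℤ))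
      = (t : ℤ) * ((p : ℤ) - t) := by
    have : ((∑ a ∈ A, mu B a : ℕ) : ℤ) + ((∑ x ∈ Aᶜ, mu B x : ℕ) : ℤ)
        = ((B.card * (p - B.card) : ℕ) : ℤ) := by
      rw [← Nat.cast_add, hcompl, hsum_univ]
    push_cast at this
    rw [hB, Nat.cast_sub htp] at this
    exact this
  -- lower bound on the complement sum, in ℤ
  have hmuX' : ((k * k : ℕ) : ℤ) / 4 ≤ ∑ x ∈ Aᶜ, (mu B x : ℤ) := by
    have h4 : (((k * k) / 4 : ℕ) : ℤ) ≤ ((∑ x ∈ Aᶜ, mu B x : ℕ) : ℤ) := by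
      exact_mod_cast hmuX
    have h5 : ((k * k : ℕ) : ℤ) / 4 ≤ (((k * k) / 4 : ℕ) : ℤ) := by
      set K := k * k
      omega
    rw [Nat.cast_sum] at h4
    exact h5.trans h4
  -- final arithmetic
  have hkZ : (k : ℤ) = (p : ℤ) - s := by
    rw [hkdef, Nat.cast_sub hsp]
  have hm : (s : ℤ) + 2 * t - p = 2 * (t : ℤ) - k := by
    rw [hkZ]; ring
  have hsq : ((s : ℤ) + 2 * t - p) ^ 2
      = (k : ℤ) * k + ((t : ℤ) * t - t * k) * 4 := by
    rw [hm]; ring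
  have hdiv : ((s : ℤ) + 2 * t - p) ^ 2 / 4
      = ((k : ℤ) * k) / 4 + ((t : ℤ) * t - t * k) := by
    rw [hsq, Int.add_mul_ediv_right _ _ (by norm_num : (4 : ℤ) ≠ 0)]
  rw [hdiv, hcount']
  have hlin : (s : ℤ) * t - ((t : ℤ) * ((p : ℤ) - t) - ∑ x ∈ Aᶜ, (mu B x : ℤ))
      = ((t : ℤ) * t - t * k) + ((s:ℤ)*t - t*t + t*k - t*((p:ℤ)-t)) + ∑ x ∈ Aᶜ, (mu B x : ℤ) := by
    ring
  have hzero : (s:ℤ)*t - t*t + t*k - t*((p:ℤ)-t) = 0 := by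
    rw [hkZ]; ring
  have hAsum : ∑ a ∈ A, (mu B a : ℤ)
      = (t : ℤ) * ((p : ℤ) - t) - ∑ x ∈ Aᶜ, (mu B x : ℤ) := by
    linarith [hcompl']
  have hcast : ((k * k : ℕ) : ℤ) = (k : ℤ) * k := by push_cast; ring
  rw [hcast] at hmuX'
  rw [hAsum]
  linarith [hmuX', hlin, hzero]
end

section
/- Let p be an odd prime, 1 ≤ s,t ≤ p−1, and let A, B be subsets of Z_p with |A| = s, |B| = t. If s+1 ≤ 2t ≤ 2p−s−1, then r(A,B,B) ≤ ⌈s(4t−s)/4⌉. -/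
/-!
Write `φ(a) = #{b ∈ B | a + b ∉ B}`. Then `r(A,B,B) = st - ∑_{a ∈ A} φ(a)`, so it suffices to show
`∑_{a ∈ A} φ(a) ≥ ⌊s²/4⌋`. The function `φ` is subadditive with `φ(0) = 0`, bounded by
`M = min(t, p - t)`, and has total mass `t(p - t) = M(p - M)`. By Cauchy–Davenport the sublevel
sets `{φ ≤ x}` grow superadditively, which makes the sorted sequence `ψ` of values of `φ` subadditive
too. A subadditive sequence bounded by `M` with total mass `M(p - M)` has partial sums at least
those of `min(⌈i/2⌉, M)`, and these are `⌊n²/4⌋` for `n ≤ 2M`; the sum of `φ` over any `s` points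
is at least the sum of its `s` smallest values.
-/

open Finset

section Escapes
variable {G : Type*} [AddGroup G] [DecidableEq G]

def escapes (B : Finset G) (a : G) : ℕ := #{b ∈ B | a + b ∉ B}

lemma escapes_zero (B : Finset G) : escapes B 0 = 0 := by
  simp [escapes]

lemma escapes_le_card (B : Finset G) (a : G) : escapes B a ≤ #B :=
  card_filter_le _ _

lemma escapes_add_le (B : Finset G) (a₁ a₂ : G) :
    escapes B (a₁ + a₂) ≤ escapes B a₁ + escapes B a₂ := by
  calc escapes B (a₁ + a₂)
      ≤ #({b ∈ B | a₂ + b ∉ B} ∪ {c ∈ B | a₁ + c ∉ B}.image (-a₂ + ·)) := by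
        refine card_le_card fun b hb => ?_
        simp only [mem_filter, mem_union, mem_image] at hb ⊢
        by_cases h : a₂ + b ∈ B
        · exact .inr ⟨a₂ + b, ⟨h, by rw [← add_assoc]; exact hb.2⟩, neg_add_cancel_left a₂ b⟩
        · exact .inl ⟨hb.1, h⟩
    _ ≤ escapes B a₂ + escapes B a₁ := (card_union_le _ _).trans (add_le_add le_rfl card_image_le)
    _ = escapes B a₁ + escapes B a₂ := add_comm _ _

lemma card_filter_eq_add_add_sum_escapes (A B : Finset G) :
    #{x ∈ A ×ˢ B ×ˢ B | x.2.2 = x.1 + x.2.1} + ∑ a ∈ A, escapes B a = #A * #B := by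
  have htriples : #{x ∈ A ×ˢ B ×ˢ B | x.2.2 = x.1 + x.2.1} = #{x ∈ A ×ˢ B | x.1 + x.2 ∈ B} := by
    refine card_nbij' (fun x => (x.1, x.2.1)) (fun x => (x.1, x.2, x.1 + x.2)) ?_ ?_ ?_ ?_ <;>
      intro x hx <;> aesop
  have hescapes : ∑ a ∈ A, escapes B a = #{x ∈ A ×ˢ B | x.1 + x.2 ∉ B} := by
    simp only [escapes, card_filter, sum_product]
  rw [htriples, hescapes, card_filter_add_card_filter_not, card_product]

variable [Fintype G]

lemma escapes_le_card_compl (B : Finset G) (a : G) : escapes B a ≤ #Bᶜ :=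
  card_le_card_of_injOn (a + ·) (fun b hb => by simpa using (mem_filter.1 hb).2)
    (add_right_injective a).injOn

lemma sum_escapes (B : Finset G) : ∑ a, escapes B a = #B * #Bᶜ := by
  have h (b : G) : #{a | a + b ∉ B} = #Bᶜ := by
    rw [card_filter, Fintype.sum_equiv (Equiv.addRight b) (fun a => if a + b ∉ B then 1 else 0)
      (fun c => if c ∉ B then 1 else 0) (fun _ => rfl), ← card_filter, filter_not,
      filter_mem_eq_inter, univ_inter, compl_eq_univ_sdiff]
  simp only [escapes, card_filter]
  rw [sum_comm]
  simp only [← card_filter, h, sum_const, smul_eq_mul]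

end Escapes

lemma sum_eq_sum_range_card_filter_lt {ι : Type*} (s : Finset ι) (g : ι → ℕ) {M : ℕ}
    (hg : ∀ i ∈ s, g i ≤ M) : ∑ i ∈ s, g i = ∑ x ∈ range M, #{i ∈ s | x < g i} := by
  have h (i) (hi : i ∈ s) : #{x ∈ range M | x < g i} = g i := by
    have hrange : {x ∈ range M | x < g i} = range (g i) := by
      ext x
      simp only [mem_filter, mem_range]
      have := hg i hi
      omega
    rw [hrange, card_range]
  calc ∑ i ∈ s, g i = ∑ i ∈ s, #{x ∈ range M | x < g i} := (sum_congr rfl h).symm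
    _ = ∑ x ∈ range M, #{i ∈ s | x < g i} := by simp only [card_filter]; exact sum_comm

section SortedValues
variable {α : Type*} [Fintype α] (f : α → ℕ)

def sublevelCard (x : ℕ) : ℕ := #{a | f a ≤ x}

/-- Zero-indexed; the junk value `sInf ∅ = 0` is taken for `n ≥ card α`. -/
noncomputable def nthSmallest (n : ℕ) : ℕ := sInf {x | n < sublevelCard f x}

variable {f}

lemma sublevelCard_mono : Monotone (sublevelCard f) := fun _ _ hxy =>
  card_le_card fun a => by simpa only [mem_filter, mem_univ, true_and] using (·.trans hxy)

lemma sublevelCard_eq_card {x : ℕ} (h : ∀ a, f a ≤ x) : sublevelCard f x = Fintype.card α := by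
  rw [sublevelCard, filter_true_of_mem fun a _ => h a, card_univ]

lemma card_sub_sublevelCard_le (A : Finset α) (x : ℕ) :
    #A - sublevelCard f x ≤ #{a ∈ A | x < f a} := by
  have hsplit := card_filter_add_card_filter_not (s := A) (fun a => f a ≤ x)
  have hsub : #{a ∈ A | f a ≤ x} ≤ sublevelCard f x :=
    card_le_card (filter_subset_filter _ (subset_univ A))
  simp only [not_le] at hsplit
  omega

lemma card_filter_lt_eq_card_sub_sublevelCard (x : ℕ) :
    #{a | x < f a} = Fintype.card α - sublevelCard f x := by
  have hsplit := card_filter_add_card_filter_not (s := univ) (fun a => f a ≤ x)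
  simp only [not_le, card_univ] at hsplit
  rw [sublevelCard]
  omega

lemma nthSmallest_le_iff {n : ℕ} (hn : n < Fintype.card α) {x : ℕ} :
    nthSmallest f n ≤ x ↔ n < sublevelCard f x := by
  have hne : {x | n < sublevelCard f x}.Nonempty :=
    ⟨univ.sup f, by simpa [sublevelCard_eq_card fun a => le_sup (mem_univ a)]⟩
  exact ⟨fun h => (Nat.sInf_mem hne).trans_le (sublevelCard_mono h), fun h => Nat.sInf_le h⟩

lemma lt_nthSmallest_iff {n : ℕ} (hn : n < Fintype.card α) {x : ℕ} :
    x < nthSmallest f n ↔ sublevelCard f x ≤ n := by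
  rw [← not_le, nthSmallest_le_iff hn, not_lt]

lemma nthSmallest_le_of_forall_le {n M : ℕ} (hn : n < Fintype.card α) (h : ∀ a, f a ≤ M) :
    nthSmallest f n ≤ M := by
  rwa [nthSmallest_le_iff hn, sublevelCard_eq_card h]

lemma card_range_filter_lt_nthSmallest {s : ℕ} (hs : s ≤ Fintype.card α) (x : ℕ) :
    #{n ∈ range s | x < nthSmallest f n} = s - sublevelCard f x := by
  rw [← Nat.card_Ico]
  congr 1
  ext n
  simp only [mem_filter, mem_range, mem_Ico]
  constructor
  · rintro ⟨hns, hx⟩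
    exact ⟨(lt_nthSmallest_iff (hns.trans_le hs)).1 hx, hns⟩
  · rintro ⟨hx, hns⟩
    exact ⟨hns, (lt_nthSmallest_iff (hns.trans_le hs)).2 hx⟩

lemma sum_range_nthSmallest_eq_sum_range_sub {s : ℕ} (hs : s ≤ Fintype.card α) :
    ∑ n ∈ range s, nthSmallest f n = ∑ x ∈ range (univ.sup f), (s - sublevelCard f x) := by
  rw [sum_eq_sum_range_card_filter_lt (range s) (nthSmallest f) fun n hn =>
    nthSmallest_le_of_forall_le ((mem_range.1 hn).trans_le hs) fun a => le_sup (mem_univ a)]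
  exact sum_congr rfl fun x _ => card_range_filter_lt_nthSmallest hs x

lemma sum_range_nthSmallest_le (A : Finset α) :
    ∑ n ∈ range #A, nthSmallest f n ≤ ∑ a ∈ A, f a := by
  rw [sum_range_nthSmallest_eq_sum_range_sub (card_le_univ A),
    sum_eq_sum_range_card_filter_lt A f fun a _ => le_sup (mem_univ a)]
  exact sum_le_sum fun x _ => card_sub_sublevelCard_le A x

lemma sum_range_card_nthSmallest : ∑ n ∈ range (Fintype.card α), nthSmallest f n = ∑ a, f a := by
  rw [sum_range_nthSmallest_eq_sum_range_sub le_rfl,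
    sum_eq_sum_range_card_filter_lt univ f fun a _ => le_sup (mem_univ a)]
  exact sum_congr rfl fun x _ => (card_filter_lt_eq_card_sub_sublevelCard x).symm

end SortedValues

section SubadditiveSequence
variable {u : ℕ → ℕ}

lemma succ_mul_le_two_mul_sum_range {n : ℕ} (hu : ∀ i ≤ n, u n ≤ u i + u (n - i)) :
    (n + 1) * u n ≤ 2 * ∑ i ∈ range (n + 1), u i := by
  have hreflect : ∑ i ∈ range (n + 1), u (n - i) = ∑ i ∈ range (n + 1), u i := by
    simpa using sum_range_reflect u (n + 1)
  calc (n + 1) * u n = ∑ _i ∈ range (n + 1), u n := by simp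
    _ ≤ ∑ i ∈ range (n + 1), (u i + u (n - i)) :=
        sum_le_sum fun i hi => hu i (Nat.lt_succ_iff.1 (mem_range.1 hi))
    _ = 2 * ∑ i ∈ range (n + 1), u i := by rw [sum_add_distrib, hreflect, two_mul]

/-- The partial sums of the sorted values of `φ` when `B` is an interval of length `M ≤ p / 2`. -/
def extremalSum (M n : ℕ) : ℕ := ∑ i ∈ range n, min ((i + 1) / 2) M

lemma extremalSum_of_le_two_mul {M n : ℕ} (hn : n ≤ 2 * M) : extremalSum M n = n * n / 4 := by
  induction n with
  | zero => rfl
  | succ n ih =>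
    rw [extremalSum, sum_range_succ, ← extremalSum, ih (by omega), min_eq_left (by omega)]
    obtain ⟨k, rfl | rfl⟩ := Nat.even_or_odd' n <;> ring_nf <;> omega

lemma extremalSum_of_two_mul_le {M n : ℕ} (hn : 2 * M ≤ n) : extremalSum M n = M * (n - M) := by
  obtain ⟨j, rfl⟩ := Nat.exists_eq_add_of_le hn
  rw [extremalSum, sum_range_add, ← extremalSum, extremalSum_of_le_two_mul le_rfl,
    sum_congr rfl fun i _ => min_eq_right (by omega), sum_const, card_range, smul_eq_mul,
    show 2 * M + j - M = M + j by omega]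
  ring_nf
  omega

lemma two_mul_sq_div_four_le (n : ℕ) : 2 * (n * n / 4) ≤ (n - 1) * ((n + 1) / 2 + 1) := by
  obtain ⟨k, rfl | rfl⟩ := Nat.even_or_odd' n
  · rcases k with _ | k
    · simp
    · rw [show 2 * (k + 1) - 1 = 2 * k + 1 by omega, show (2 * (k + 1) + 1) / 2 = k + 1 by omega]
      ring_nf
      omega
  · rw [show 2 * k + 1 - 1 = 2 * k by omega, show (2 * k + 1 + 1) / 2 = k + 1 by omega]
    ring_nf
    omega

lemma extremalSum_le_sum_range {N M : ℕ} (hM : 2 * M ≤ N) (hbound : ∀ n < N, u n ≤ M)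
    (hsub : ∀ m n, m + n < N → u (m + n) ≤ u m + u n)
    (hsum : M * (N - M) ≤ ∑ n ∈ range N, u n) {n : ℕ} (hn : n ≤ N) :
    extremalSum M n ≤ ∑ i ∈ range n, u i := by
  -- Downward from `n = N`. If `u n` exceeds the extremal increment, pairing
  -- `u n ≤ u i + u (n - i)` gives `(n - 1) u n ≤ 2 ∑_{i<n} u i`, which is already enough.
  induction hn using Nat.decreasingInduction with
  | self => rwa [extremalSum_of_two_mul_le hM]
  | of_succ n hn ih =>
    rw [extremalSum, sum_range_succ, ← extremalSum, sum_range_succ] at ih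
    by_cases hle : u n ≤ min ((n + 1) / 2) M
    · omega
    have hlarge : (n + 1) / 2 < u n ∧ n + 1 < 2 * M := by
      have := hbound n hn
      constructor <;> omega
    have hpair := succ_mul_le_two_mul_sum_range (u := u) (n := n) fun i hi => by
      simpa [Nat.add_sub_cancel' hi] using hsub i (n - i) (by omega)
    rw [sum_range_succ] at hpair
    calc extremalSum M n = n * n / 4 := extremalSum_of_le_two_mul (by omega)
      _ ≤ ∑ i ∈ range n, u i := by
        have := two_mul_sq_div_four_le n
        have : (n - 1) * ((n + 1) / 2 + 1) ≤ (n - 1) * u n := Nat.mul_le_mul_left _ hlarge.1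
        have : (n - 1) * u n ≤ (n + 1) * u n - 2 * u n := by
          rw [← Nat.sub_mul]
          exact Nat.mul_le_mul_right _ (by omega)
        omega

end SubadditiveSequence

section CauchyDavenport
variable {p : ℕ} [NeZero p] {f : ZMod p → ℕ}

lemma min_le_sublevelCard_add (hp : p.Prime) (hf0 : f 0 = 0)
    (hf : ∀ a b, f (a + b) ≤ f a + f b) (x y : ℕ) :
    min p (sublevelCard f x + sublevelCard f y - 1) ≤ sublevelCard f (x + y) := by
  have hne (z : ℕ) : ({a | f a ≤ z} : Finset (ZMod p)).Nonempty := ⟨0, by simp [hf0]⟩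
  refine (ZMod.cauchy_davenport hp (hne x) (hne y)).trans (card_le_card ?_)
  intro c hc
  obtain ⟨a, ha, b, hb, rfl⟩ := mem_add.1 hc
  simp only [mem_filter, mem_univ, true_and] at ha hb ⊢
  exact (hf a b).trans (add_le_add ha hb)

lemma nthSmallest_add_le (hp : p.Prime) (hf0 : f 0 = 0) (hf : ∀ a b, f (a + b) ≤ f a + f b)
    {m n : ℕ} (hmn : m + n < p) : nthSmallest f (m + n) ≤ nthSmallest f m + nthSmallest f n := by
  have hcard : Fintype.card (ZMod p) = p := ZMod.card p
  rw [nthSmallest_le_iff (hmn.trans_le hcard.ge)]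
  have hm := (nthSmallest_le_iff (f := f) (n := m) (by omega)).1 le_rfl
  have hn := (nthSmallest_le_iff (f := f) (n := n) (by omega)).1 le_rfl
  have := min_le_sublevelCard_add hp hf0 hf (nthSmallest f m) (nthSmallest f n)
  omega

theorem sq_div_four_le_sum_escapes (hp : p.Prime) (A B : Finset (ZMod p))
    (hA : #A ≤ 2 * min #B (p - #B)) : #A * #A / 4 ≤ ∑ a ∈ A, escapes B a := by
  set M := min #B (p - #B)
  have hcard : Fintype.card (ZMod p) = p := ZMod.card p
  have hcompl : #Bᶜ = p - #B := by rw [card_compl, hcard]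
  have hbound (n : ℕ) (hn : n < p) : nthSmallest (escapes B) n ≤ M :=
    nthSmallest_le_of_forall_le (hn.trans_le hcard.ge) fun a =>
      le_min (escapes_le_card B a) (hcompl ▸ escapes_le_card_compl B a)
  have hsum : M * (p - M) ≤ ∑ n ∈ range p, nthSmallest (escapes B) n := by
    have hB : #B ≤ p := (card_le_univ B).trans_eq hcard
    have htotal := sum_range_card_nthSmallest (f := escapes B)
    rw [sum_escapes, hcompl, hcard] at htotal
    rw [htotal]
    rcases min_cases #B (p - #B) with ⟨hM, -⟩ | ⟨hM, -⟩ <;> rw [show M = _ from hM]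
    rw [Nat.sub_sub_self hB, mul_comm]
  calc #A * #A / 4 = extremalSum M #A := (extremalSum_of_le_two_mul hA).symm
    _ ≤ ∑ n ∈ range #A, nthSmallest (escapes B) n :=
        extremalSum_le_sum_range (by omega) hbound
          (fun m n => nthSmallest_add_le hp (escapes_zero B) (escapes_add_le B)) hsum
          ((card_le_univ A).trans_eq hcard)
    _ ≤ ∑ a ∈ A, escapes B a := sum_range_nthSmallest_le A

end CauchyDavenport

theorem stmt_8_general {p : ℕ} [NeZero p] (hp : p.Prime) {s t : ℕ}
    (A B : Finset (ZMod p)) (hA : A.card = s) (hB : B.card = t)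
    (h1 : (s : ℤ) + 1 ≤ 2 * t) (h2 : 2 * (t : ℤ) ≤ 2 * p - s - 1) :
    (((A ×ˢ B ×ˢ B).filter (fun x => x.2.2 = x.1 + x.2.1)).card : ℤ)
      ≤ ((s : ℤ) * (4 * t - s) + 3) / 4 := by
  have hst : s ≤ 2 * min t (p - t) := by omega
  have hkey := sq_div_four_le_sum_escapes hp A B (by rwa [hA, hB])
  have hcount := card_filter_eq_add_add_sum_escapes A B
  rw [hA] at hkey
  rw [hA, hB] at hcount
  have hdiv := Nat.div_add_mod (s * s) 4
  have hmod := Nat.mod_lt (s * s) (by norm_num : 4 > 0)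
  rw [Int.le_ediv_iff_mul_le (by norm_num)]
  zify at *
  nlinarith

theorem stmt_8 {p : ℕ} [NeZero p] (hp : p.Prime) (hodd : Odd p) {s t : ℕ}
    (hs1 : 1 ≤ s) (hs2 : s ≤ p - 1) (ht1 : 1 ≤ t) (ht2 : t ≤ p - 1)
    (A B : Finset (ZMod p)) (hA : A.card = s) (hB : B.card = t)
    (h1 : (s : ℤ) + 1 ≤ 2 * t) (h2 : 2 * (t : ℤ) ≤ 2 * p - s - 1) :
    (((A ×ˢ B ×ˢ B).filter (fun x => x.2.2 = x.1 + x.2.1)).card : ℤ)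
      ≤ ((s : ℤ) * (4 * t - s) + 3) / 4 :=
  stmt_8_general hp A B hA hB h1 h2
end

section
/- Let p be an odd prime, 1 ≤ s,t ≤ p−1, and let A, B be subsets of Z_p with |A| = s, |B| = t. If 2t ≥ 2p−s, then r(A,B,B) ≤ s(2t−p) + (p−t)². -/
theorem stmt_9 {p : ℕ} [NeZero p] (hp : p.Prime) (hodd : Odd p) {s t : ℕ}
    (hs1 : 1 ≤ s) (hs2 : s ≤ p - 1) (ht1 : 1 ≤ t) (ht2 : t ≤ p - 1)
    (A B : Finset (ZMod p)) (hA : A.card = s) (hB : B.card = t)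
    (h : 2 * (p : ℤ) - s ≤ 2 * t) :
    (((A ×ˢ B ×ˢ B).filter (fun x => x.2.2 = x.1 + x.2.1)).card : ℤ)
      ≤ (s : ℤ) * (2 * t - p) + ((p : ℤ) - t) ^ 2 := by
  classical
  have hcard : Fintype.card (ZMod p) = p := ZMod.card p
  -- step 1: the triple count equals ∑ a in A, f a
  have h1 : ((A ×ˢ B ×ˢ B).filter (fun x => x.2.2 = x.1 + x.2.1)).card
      = ∑ a ∈ A, (B.filter (fun b => a + b ∈ B)).card := by
    have hb : ((A ×ˢ B ×ˢ B).filter (fun x => x.2.2 = x.1 + x.2.1)).card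
        = ((A ×ˢ B).filter (fun x => x.1 + x.2 ∈ B)).card := by
      refine Finset.card_bij' (fun x _ => (x.1, x.2.1))
        (fun y _ => (y.1, y.2, y.1 + y.2)) ?_ ?_ ?_ ?_
      · intro a ha
        simp only [Finset.mem_filter, Finset.mem_product] at ha ⊢
        obtain ⟨⟨h1, h2, h3⟩, h4⟩ := ha
        exact ⟨⟨h1, h2⟩, h4 ▸ h3⟩
      · intro a ha
        simp only [Finset.mem_filter, Finset.mem_product] at ha ⊢
        obtain ⟨⟨h1, h2⟩, h3⟩ := ha
        exact ⟨⟨h1, h2, h3⟩, trivial⟩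
      · intro a ha
        obtain ⟨a1, a2, a3⟩ := a
        simp only [Finset.mem_filter] at ha
        simp [ha.2]
      · intro a ha
        rfl
    rw [hb, Finset.card_filter, Finset.sum_product]
    exact Finset.sum_congr rfl fun a _ => (Finset.card_filter _ _).symm
  -- step 2: total sum over all of ZMod p is t^2
  have h2 : ∑ a : ZMod p, (B.filter (fun b => a + b ∈ B)).card = t * t := by
    have hb : ((Finset.univ ×ˢ B).filter (fun x : ZMod p × ZMod p => x.1 + x.2 ∈ B)).card
        = (B ×ˢ B).card := by
      refine Finset.card_bij' (fun x _ => (x.2, x.1 + x.2))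
        (fun y _ => (y.2 - y.1, y.1)) ?_ ?_ ?_ ?_
      · intro a ha
        simp only [Finset.mem_filter, Finset.mem_product, Finset.mem_univ, true_and] at ha ⊢
        exact ⟨ha.1, ha.2⟩
      · intro a ha
        simp only [Finset.mem_product] at ha
        simp only [Finset.mem_filter, Finset.mem_product, Finset.mem_univ, true_and]
        exact ⟨ha.1, by simpa using ha.2⟩
      · intro a ha
        obtain ⟨a1, a2⟩ := a
        simp
      · intro a ha
        obtain ⟨a1, a2⟩ := a
        simp
    have hc : ∑ a : ZMod p, (B.filter (fun b => a + b ∈ B)).card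
        = ((Finset.univ ×ˢ B).filter (fun x : ZMod p × ZMod p => x.1 + x.2 ∈ B)).card := by
      rw [Finset.card_filter, Finset.sum_product]
      exact Finset.sum_congr rfl fun a _ => Finset.card_filter _ _
    rw [hc, hb, Finset.card_product, hB]
  -- step 3: each term is ≥ 2t - p
  have h3 : ∀ a : ZMod p, (2 * t : ℤ) - p ≤ ((B.filter (fun b => a + b ∈ B)).card : ℤ) := by
    intro a
    have heq : B.filter (fun b => a + b ∈ B) = B ∩ B.image (fun c => c - a) := by
      ext b
      simp only [Finset.mem_filter, Finset.mem_inter, Finset.mem_image]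
      constructor
      · rintro ⟨hb, hab⟩
        exact ⟨hb, a + b, hab, by ring⟩
      · rintro ⟨hb, c, hc, hcb⟩
        refine ⟨hb, ?_⟩
        have : c = a + b := by rw [← hcb]; ring
        rwa [← this]
    have himg : (B.image (fun c => c - a)).card = t := by
      rw [Finset.card_image_of_injective _ (sub_left_injective), hB]
    have hun : (B ∪ B.image (fun c => c - a)).card ≤ p := by
      calc (B ∪ B.image (fun c => c - a)).card ≤ Fintype.card (ZMod p) :=
            Finset.card_le_univ _
        _ = p := hcard
    have hkey := Finset.card_inter_add_card_union B (B.image (fun c => c - a))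
    rw [hB, himg] at hkey
    rw [heq]
    have h4 : ((B ∩ B.image (fun c => c - a)).card : ℤ)
        + ((B ∪ B.image (fun c => c - a)).card : ℤ) = t + t := by
      exact_mod_cast congrArg (Nat.cast : ℕ → ℤ) hkey
    have h5 : ((B ∪ B.image (fun c => c - a)).card : ℤ) ≤ p := by exact_mod_cast hun
    linarith
  -- step 4: combine
  have hsplit : (∑ a ∈ A, ((B.filter (fun b => a + b ∈ B)).card : ℤ))
      + ∑ a ∈ Aᶜ, ((B.filter (fun b => a + b ∈ B)).card : ℤ) = (t : ℤ) * t := by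
    rw [Finset.sum_add_sum_compl]
    exact_mod_cast congrArg (Nat.cast : ℕ → ℤ) h2
  have hsp : s ≤ p := le_trans hs2 (Nat.sub_le p 1)
  have hAc : (Aᶜ.card : ℤ) = (p : ℤ) - s := by
    rw [Finset.card_compl, hcard, hA]
    omega
  have hcompl : ((p : ℤ) - s) * (2 * t - p)
      ≤ ∑ a ∈ Aᶜ, ((B.filter (fun b => a + b ∈ B)).card : ℤ) := by
    have := Finset.card_nsmul_le_sum Aᶜ
      (fun a => ((B.filter (fun b => a + b ∈ B)).card : ℤ)) (2 * (t : ℤ) - p)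
      (fun a _ => h3 a)
    rw [nsmul_eq_mul, hAc] at this
    linarith
  have hAsum : ((((A ×ˢ B ×ˢ B).filter (fun x => x.2.2 = x.1 + x.2.1)).card : ℤ))
      = ∑ a ∈ A, ((B.filter (fun b => a + b ∈ B)).card : ℤ) := by
    rw [h1]; push_cast; ring
  rw [hAsum]
  have hfinal : (s : ℤ) * (2 * t - p) + ((p : ℤ) - t) ^ 2
      = (t : ℤ) * t - ((p : ℤ) - s) * (2 * t - p) := by ring
  linarith
end

section
/- Let p be an odd prime, 1 ≤ s,t ≤ p−1, and let A, B be subsets of Z_p with |A| = s, |B| = t. Define f(s,t) = 0 if 2t ≤ p−s+1; f(s,t) = ⌊(s+2t−p)²/4⌋ if p−s+2 ≤ 2t ≤ p+s−2; f(s,t) = s(2t−p) if 2t ≥ p+s−1. Define g(s,t) = t² if 2t ≤ s; g(s,t) = ⌈s(4t−s)/4⌉ if s+1 ≤ 2t ≤ 2p−s−1; g(s,t) = s(2t−p)+(p−t)² if 2t ≥ 2p−s. Then f(s,t) ≤ r(A,B,B) ≤ g(s,t). -/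
/-!
Write `r(A,B,B) = |A||B| - ∑_{a ∈ A} δ(a)` with `δ(a) = |{b ∈ B | a + b ∉ B}|`. The defect `δ`
vanishes at `0`, is even and subadditive, is bounded by `min(t, p - t)` and sums to `t(p - t)` over
`ℤ/p`. Its sublevel sets `D_j` are therefore symmetric, of odd size, with `D_i + D_j ⊆ D_{i+j}`. If
`|D_k| ≤ 2k`, Cauchy–Davenport pairs `D_j` with `D_{k-1-j}` to give `∑_{j<k} |D_j| ≤ k²`; otherwise
this bound propagates down from `k + 1`. Via the layer-cake identity this is the Pollard-type
inequality `∑_g min(k, δ g) ≥ k(p - k)` for `k ≤ min(t, p - t)`, hence `∑_{g ∈ H} δ g ≥ k(|H| - k)`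
for every `H`. Taking `H = A` and `H = Aᶜ` gives `st - t(p - t) + k(p - s - k) ≤ r ≤ st - k(s - k)`,
and the best choice of `k` yields `f` and `g`.
-/

/-- Lower bound function f(s,t); integer division `/` on nonnegative numerators is the floor. -/
def fBound (p s t : ℤ) : ℤ :=
  if 2 * t ≤ p - s + 1 then 0
  else if 2 * t ≤ p + s - 2 then (s + 2 * t - p) ^ 2 / 4
  else s * (2 * t - p)

/-- Upper bound function g(s,t); `(x+3)/4` is the ceiling of x/4. -/
def gBound (p s t : ℤ) : ℤ :=
  if 2 * t ≤ s then t ^ 2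
  else if 2 * t ≤ 2 * p - s - 1 then (s * (4 * t - s) + 3) / 4
  else s * (2 * t - p) + (p - t) ^ 2

open Finset Pointwise

variable {G : Type*} [AddCommGroup G] [DecidableEq G]

def shiftDefect (B : Finset G) (a : G) : ℕ := #{b ∈ B | a + b ∉ B}

def addTriples (A B : Finset G) : Finset (G × G × G) :=
  (A ×ˢ B ×ˢ B).filter (fun x => x.2.2 = x.1 + x.2.1)

section AddCommGroup

variable (B : Finset G)

lemma card_filter_add_mem_add_shiftDefect (a : G) :
    #{b ∈ B | a + b ∈ B} + shiftDefect B a = #B :=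
  card_filter_add_card_filter_not _

@[simp] lemma shiftDefect_zero : shiftDefect B 0 = 0 := by
  simp [shiftDefect]

lemma shiftDefect_le_card (a : G) : shiftDefect B a ≤ #B := card_filter_le _ _

lemma shiftDefect_neg (a : G) : shiftDefect B (-a) = shiftDefect B a := by
  have hshift : #{b ∈ B | -a + b ∈ B} = #{b ∈ B | a + b ∈ B} :=
    card_equiv (Equiv.addLeft (-a)) (by simp [and_comm])
  have := card_filter_add_mem_add_shiftDefect B a
  have := card_filter_add_mem_add_shiftDefect B (-a)
  omega

lemma shiftDefect_add_le (g h : G) :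
    shiftDefect B (g + h) ≤ shiftDefect B g + shiftDefect B h := by
  -- if `b` is pushed out by `g + h` but not by `h`, then `h + b` is pushed out by `g`
  calc shiftDefect B (g + h)
      ≤ #({b ∈ B | h + b ∉ B} ∪ {b ∈ B | h + b ∈ B ∧ g + (h + b) ∉ B}) := by
        refine card_le_card fun b hb => ?_
        simp only [mem_filter, mem_union, add_assoc] at hb ⊢
        tauto
    _ ≤ shiftDefect B h + #{b ∈ B | h + b ∈ B ∧ g + (h + b) ∉ B} := card_union_le _ _
    _ ≤ shiftDefect B h + shiftDefect B g := by
        gcongr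
        exact card_le_card_of_injOn (h + ·) (fun b hb => by simp_all) (fun b _ c _ => by simp)
    _ = shiftDefect B g + shiftDefect B h := add_comm _ _

lemma card_addTriples (A : Finset G) :
    #(addTriples A B) = ∑ a ∈ A, #{b ∈ B | a + b ∈ B} := by
  rw [addTriples, card_filter, sum_product]
  refine sum_congr rfl fun a _ => ?_
  rw [sum_product, card_filter]
  exact sum_congr rfl fun b _ => sum_ite_eq' B (a + b) (fun _ => 1)

lemma card_addTriples_add_sum_shiftDefect (A : Finset G) :
    #(addTriples A B) + ∑ a ∈ A, shiftDefect B a = #A * #B := by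
  rw [card_addTriples, ← sum_add_distrib,
    sum_congr rfl fun a _ => card_filter_add_mem_add_shiftDefect B a, sum_const, smul_eq_mul]

lemma odd_card_of_neg_mem {S : Finset G} (hG : Odd (Nat.card G)) (h0 : 0 ∈ S)
    (hneg : ∀ x ∈ S, -x ∈ S) : Odd #S := by
  have hfree {x : G} (hx : -x = x) : x = 0 := by
    have h2 : 2 • x = 2 • (0 : G) := by
      rw [two_nsmul, smul_zero]
      nth_rw 1 [← hx]
      exact neg_add_cancel x
    exact (Nat.Coprime.nsmul_right_bijective (Nat.coprime_two_right.mpr hG)).injective h2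
  -- `x ↦ -x` is a fixed-point-free involution of `S \ {0}`
  have heven : Even #(S.erase 0) := by
    rw [← ZMod.natCast_eq_zero_iff_even, card_eq_sum_ones, Nat.cast_sum]
    refine sum_involution (fun x _ => -x) (fun _ _ => by decide)
      (fun x hx _ h => (mem_erase.mp hx).1 (hfree h)) (fun x hx => ?_) (fun _ _ => neg_neg _)
    simp only [mem_erase, neg_ne_zero] at hx ⊢
    exact ⟨hx.1, hneg x hx.2⟩
  rw [← card_erase_add_one h0]
  exact heven.add_one

end AddCommGroup

section Fintype

variable [Fintype G] (B : Finset G)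

lemma shiftDefect_le_card_sub (a : G) : shiftDefect B a ≤ Fintype.card G - #B := by
  rw [← card_compl]
  exact card_le_card_of_injOn (a + ·) (fun b hb => by simp_all) (fun b _ c _ => by simp)

lemma sum_shiftDefect : ∑ a, shiftDefect B a = #B * (Fintype.card G - #B) := by
  have hfiber (b : G) : #{a | a + b ∉ B} = Fintype.card G - #B := by
    rw [← card_compl]
    exact card_equiv (Equiv.addRight b) (by simp)
  calc ∑ a, shiftDefect B a = ∑ b ∈ B, #{a | a + b ∉ B} :=
        sum_card_bipartiteAbove_eq_sum_card_bipartiteBelow _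
    _ = #B * (Fintype.card G - #B) := by simp [hfiber]

def defectBall (k : ℕ) : Finset G := {g | shiftDefect B g ≤ k}

@[simp] lemma mem_defectBall {k : ℕ} {g : G} :
    g ∈ defectBall B k ↔ shiftDefect B g ≤ k := by
  simp [defectBall]

lemma defectBall_mono : Monotone (defectBall B) :=
  fun _ _ hij _ hg => (mem_defectBall B).2 (((mem_defectBall B).1 hg).trans hij)

lemma defectBall_nonempty (k : ℕ) : (defectBall B k).Nonempty := ⟨0, by simp⟩

lemma add_defectBall_subset (i j : ℕ) :
    defectBall B i + defectBall B j ⊆ defectBall B (i + j) := by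
  intro x hx
  obtain ⟨g, hg, h, hh, rfl⟩ := mem_add.mp hx
  rw [mem_defectBall] at *
  exact (shiftDefect_add_le B g h).trans (add_le_add hg hh)

lemma odd_card_defectBall (hG : Odd (Fintype.card G)) (k : ℕ) : Odd #(defectBall B k) :=
  odd_card_of_neg_mem (by rwa [Nat.card_eq_fintype_card]) (by simp)
    (fun x hx => by rwa [mem_defectBall, shiftDefect_neg, ← mem_defectBall])

lemma sum_min_shiftDefect_add_sum_card_defectBall (k : ℕ) :
    ∑ g, min k (shiftDefect B g) + ∑ j ∈ range k, #(defectBall B j) = k * Fintype.card G := by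
  induction k with
  | zero => simp
  | succ k ih =>
    have hmin (g : G) : min (k + 1) (shiftDefect B g) =
        min k (shiftDefect B g) + if k < shiftDefect B g then 1 else 0 := by
      split_ifs <;> omega
    have hsplit : #{g | k < shiftDefect B g} + #(defectBall B k) = Fintype.card G := by
      simpa [defectBall, not_lt] using
        card_filter_add_card_filter_not (s := univ) (fun g => k < shiftDefect B g)
    rw [sum_congr rfl fun g _ => hmin g, sum_add_distrib, sum_boole, sum_range_succ]
    simp only [Nat.cast_id]
    linarith

end Fintype

section ZMod

variable {p : ℕ} [Fact p.Prime] (B : Finset (ZMod p))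

lemma card_le_of_zmod (S : Finset (ZMod p)) : #S ≤ p := by
  simpa using card_le_univ S

lemma min_le_card_defectBall_add (i j : ℕ) :
    min p (#(defectBall B i) + #(defectBall B j) - 1) ≤ #(defectBall B (i + j)) :=
  (ZMod.cauchy_davenport Fact.out (defectBall_nonempty B i) (defectBall_nonempty B j)).trans
    (card_le_card (add_defectBall_subset B i j))

lemma sum_range_card_defectBall_le_of_card_le (hodd : Odd p) {k : ℕ} (hkp : 2 * k < p)
    (hball : #(defectBall B k) ≤ 2 * k) : ∑ j ∈ range k, #(defectBall B j) ≤ k * k := by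
  have hball_odd : Odd #(defectBall B k) := odd_card_defectBall B (by rwa [ZMod.card]) k
  -- Cauchy–Davenport, with `#(defectBall B (k - 1)) ≤ #(defectBall B k) ≤ 2k - 1` by parity
  have hpair (j : ℕ) (hj : j ∈ range k) :
      #(defectBall B j) + #(defectBall B (k - 1 - j)) ≤ 2 * k := by
    have hcd := min_le_card_defectBall_add B j (k - 1 - j)
    rw [mem_range] at hj
    rw [show j + (k - 1 - j) = k - 1 by omega] at hcd
    have hmono := card_le_card (defectBall_mono B (show k - 1 ≤ k by omega))
    have := (defectBall_nonempty B j).card_pos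
    obtain ⟨m, hm⟩ := hball_odd
    omega
  have hsum := sum_le_sum hpair
  rw [sum_add_distrib, sum_range_reflect (fun j => #(defectBall B j)), sum_const, card_range,
    smul_eq_mul] at hsum
  linarith

lemma sum_range_card_defectBall_le (hodd : Odd p) {k : ℕ} (hk : k ≤ #B) (hk' : k ≤ p - #B) :
    ∑ j ∈ range k, #(defectBall B j) ≤ k * k := by
  have hB := card_le_of_zmod B
  have hkm : k ≤ min #B (p - #B) := le_min hk hk'
  generalize hm : min #B (p - #B) = m at hkm
  refine Nat.decreasingInduction
    (motive := fun k _ => ∑ j ∈ range k, #(defectBall B j) ≤ k * k) (fun k hkm ih => ?_) ?_ hkm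
  · rw [sum_range_succ] at ih
    by_cases hball : #(defectBall B k) ≤ 2 * k
    · exact sum_range_card_defectBall_le_of_card_le B hodd (by omega) hball
    · nlinarith
  · -- at radius `m` no defect is truncated, so the layer-cake identity is explicit
    have hlayer := sum_min_shiftDefect_add_sum_card_defectBall B m
    have htrunc (g : ZMod p) : min m (shiftDefect B g) = shiftDefect B g :=
      min_eq_right <| hm ▸
        le_min (shiftDefect_le_card B g) (by simpa using shiftDefect_le_card_sub B g)
    rw [sum_congr rfl fun g _ => htrunc g, sum_shiftDefect, ZMod.card] at hlayer
    have : #B * (p - #B) + m * m = m * p := by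
      rcases le_total #B (p - #B) with h | h
      · rw [← hm, min_eq_left h]; zify [hB]; ring
      · rw [← hm, min_eq_right h]; zify [hB]; ring
    omega

lemma mul_sub_le_sum_min_shiftDefect (hodd : Odd p) {k : ℕ} (hk : k ≤ #B) (hk' : k ≤ p - #B) :
    k * (p - k) ≤ ∑ g, min k (shiftDefect B g) := by
  have hlayer := sum_min_shiftDefect_add_sum_card_defectBall B k
  have hball := sum_range_card_defectBall_le B hodd hk hk'
  rw [ZMod.card] at hlayer
  have : k * (p - k) + k * k = k * p := by rw [← mul_add]; congr 1; omega
  omega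

lemma mul_sub_le_sum_shiftDefect_add (hodd : Odd p) {k : ℕ} (hk : k ≤ #B) (hk' : k ≤ p - #B)
    (H : Finset (ZMod p)) : k * (p - k) ≤ ∑ g ∈ H, shiftDefect B g + k * (p - #H) := by
  calc k * (p - k) ≤ ∑ g, min k (shiftDefect B g) :=
        mul_sub_le_sum_min_shiftDefect B hodd hk hk'
    _ = ∑ g ∈ H, min k (shiftDefect B g) + ∑ g ∈ Hᶜ, min k (shiftDefect B g) :=
        (sum_add_sum_compl H _).symm
    _ ≤ ∑ g ∈ H, shiftDefect B g + ∑ _g ∈ Hᶜ, k := by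
        gcongr <;> simp
    _ = ∑ g ∈ H, shiftDefect B g + k * (p - #H) := by
        rw [sum_const, card_compl, ZMod.card, smul_eq_mul, mul_comm]

theorem card_addTriples_le (hodd : Odd p) (A B : Finset (ZMod p)) {k : ℕ} (hk : k ≤ #B)
    (hk' : k ≤ p - #B) : (#(addTriples A B) : ℤ) ≤ #A * #B - k * (#A - k) := by
  have hcount := card_addTriples_add_sum_shiftDefect B A
  have hkey := mul_sub_le_sum_shiftDefect_add B hodd hk hk' A
  have hA := card_le_of_zmod A
  zify [hA, show k ≤ p by omega] at hcount hkey
  linarith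

theorem le_card_addTriples (hodd : Odd p) (A B : Finset (ZMod p)) {k : ℕ} (hk : k ≤ #B)
    (hk' : k ≤ p - #B) :
    (#A * #B - #B * (p - #B) + k * (p - #A - k) : ℤ) ≤ #(addTriples A B) := by
  have hcount := card_addTriples_add_sum_shiftDefect B A
  have hkey := mul_sub_le_sum_shiftDefect_add B hodd hk hk' Aᶜ
  have htotal := sum_shiftDefect B
  rw [← sum_add_sum_compl A, ZMod.card] at htotal
  have hA := card_le_of_zmod A
  have hB := card_le_of_zmod B
  rw [card_compl, ZMod.card, Nat.sub_sub_self hA] at hkey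
  zify [hB, show k ≤ p by omega] at hcount hkey htotal
  linarith

end ZMod

lemma sq_le_four_mul_half_mul_add_one (n : ℤ) : n ^ 2 ≤ 4 * (n / 2 * (n - n / 2)) + 1 := by
  obtain ⟨m, rfl | rfl⟩ := Int.even_or_odd' n
  · rw [show 2 * m / 2 = m by omega]; nlinarith
  · rw [show (2 * m + 1) / 2 = m by omega]; nlinarith

theorem stmt_10_general {p : ℕ} (hp : p.Prime) (hodd : Odd p) {s t : ℕ}
    (A B : Finset (ZMod p)) (hA : A.card = s) (hB : B.card = t) :
    fBound p s t ≤ (((A ×ˢ B ×ˢ B).filter (fun x => x.2.2 = x.1 + x.2.1)).card : ℤ)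
      ∧ (((A ×ˢ B ×ˢ B).filter (fun x => x.2.2 = x.1 + x.2.1)).card : ℤ) ≤ gBound p s t := by
  have := Fact.mk hp
  subst hA hB
  have hA := card_le_of_zmod A
  have hB := card_le_of_zmod B
  change fBound p #A #B ≤ #(addTriples A B) ∧ #(addTriples A B) ≤ gBound p #A #B
  constructor
  · unfold fBound
    split_ifs with h₁ h₂
    · positivity
    · have h := le_card_addTriples hodd A B (k := (p - #A) / 2) (by omega) (by omega)
      have := sq_le_four_mul_half_mul_add_one (p - #A)
      push_cast [hA] at h
      rw [Int.ediv_le_iff_le_mul (by norm_num)]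
      nlinarith
    · have h := le_card_addTriples hodd A B (k := p - #B) (by omega) le_rfl
      push_cast [hB] at h
      linarith
  · unfold gBound
    split_ifs with h₁ h₂
    · have h := card_addTriples_le hodd A B (k := #B) le_rfl (by omega)
      linarith
    · have h := card_addTriples_le hodd A B (k := #A / 2) (by omega) (by omega)
      have := sq_le_four_mul_half_mul_add_one #A
      push_cast at h
      rw [Int.le_ediv_iff_mul_le (by norm_num)]
      nlinarith
    · have h := card_addTriples_le hodd A B (k := p - #B) (by omega) le_rfl
      push_cast [hB] at h
      linarith

theorem stmt_10 {p : ℕ} [NeZero p] (hp : p.Prime) (hodd : Odd p) {s t : ℕ}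
    (hs1 : 1 ≤ s) (hs2 : s ≤ p - 1) (ht1 : 1 ≤ t) (ht2 : t ≤ p - 1)
    (A B : Finset (ZMod p)) (hA : A.card = s) (hB : B.card = t) :
    fBound p s t ≤ (((A ×ˢ B ×ˢ B).filter (fun x => x.2.2 = x.1 + x.2.1)).card : ℤ)
      ∧ (((A ×ˢ B ×ˢ B).filter (fun x => x.2.2 = x.1 + x.2.1)).card : ℤ) ≤ gBound p s t :=
  stmt_10_general hp hodd A B hA hB
end

section
/- Let p be an odd integer, 1 ≤ s,t ≤ p−1, and B = {0,1,…,t−1} ⊆ Z_p. Define the multiset M on Z: if 2t ≤ p−1, M consists of p−2t+1 copies of 0, two copies each of 1,…,t−1, and one copy of t; if 2t ≥ p+1, M consists of 2t−p+1 copies of 2t−p, two copies each of 2t−p+1,…,t−1, and one copy of t. Then there exists a subset A of Z_p with |A| = s and r(A,B,B) = r if and only if M contains a multi-subset of cardinality s whose elements sum to r. -/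
/-!
Summing over the first coordinate, `r(A, B, B) = ∑_{a ∈ A} |B ∩ (B - a)|`. For
`B = {0, …, t-1}` and `a = k ∈ [0, p)` the overlap `|B ∩ (B - k)|` is
`(t - k)₊ + (t - (p - k))₊`, and as `k` runs over `ℤ_p` these values form exactly the multiset
`M`. Hence choosing `A` with `|A| = s` is the same as choosing a sub-multiset of `M` of
cardinality `s`, and `r(A, B, B)` is its sum.
-/

/-- The multiset M of Figure 1, as a multiset of integers. -/
noncomputable def multisetM (p t : ℕ) : Multiset ℤ :=
  if 2 * t ≤ p - 1 then
    Multiset.replicate (p - 2 * t + 1) (0 : ℤ)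
      + 2 • (Finset.Icc (1 : ℤ) ((t : ℤ) - 1)).val + {(t : ℤ)}
  else
    Multiset.replicate (2 * t - p + 1) (2 * (t : ℤ) - p)
      + 2 • (Finset.Icc (2 * (t : ℤ) - p + 1) ((t : ℤ) - 1)).val + {(t : ℤ)}

open Finset

theorem Multiset.exists_le_map_eq_of_le_map {α β : Type*} {f : α → β} {s : Multiset α}
    {N : Multiset β} (h : N ≤ s.map f) : ∃ u ≤ s, u.map f = N := by
  induction s using Quotient.inductionOn
  induction N using Quotient.inductionOn
  obtain ⟨w, hw, hws⟩ := h
  obtain ⟨u, hu, rfl⟩ := List.sublist_map_iff.mp hws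
  exact ⟨u, hu.subperm, Multiset.coe_eq_coe.mpr hw⟩

theorem Finset.exists_card_sum_eq_iff_exists_le_map {α β : Type*} [Fintype α] [AddCommMonoid β]
    (f : α → β) (s : ℕ) (r : β) :
    (∃ A : Finset α, #A = s ∧ ∑ a ∈ A, f a = r) ↔
      ∃ N ≤ univ.val.map f, Multiset.card N = s ∧ N.sum = r := by
  constructor
  · rintro ⟨A, rfl, rfl⟩
    exact ⟨A.val.map f, Multiset.map_le_map (val_le_iff.mpr (subset_univ A)),
      Multiset.card_map _ _, rfl⟩
  · rintro ⟨N, hN, rfl, rfl⟩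
    obtain ⟨u, hu, rfl⟩ := Multiset.exists_le_map_eq_of_le_map hN
    exact ⟨⟨u, Multiset.nodup_of_le hu univ.nodup⟩, (Multiset.card_map _ _).symm, rfl⟩

theorem card_filter_eq_add_eq_sum {G : Type*} [Add G] [DecidableEq G] (A B C : Finset G) :
    #{x ∈ A ×ˢ B ×ˢ C | x.2.2 = x.1 + x.2.1} = ∑ a ∈ A, #{b ∈ B | a + b ∈ C} := by
  simp only [card_filter, sum_product, sum_ite_eq']

theorem card_filter_add_mod_lt {p t k : ℕ} (ht : t ≤ p) (hk : k < p) :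
    #{n ∈ range t | (k + n) % p < t} = (t - k) + (t - (p - k)) := by
  have hfilter : {n ∈ range t | (k + n) % p < t} = range (t - k) ∪ Ico (p - k) t := by
    ext n
    simp only [mem_filter, mem_range, mem_union, mem_Ico]
    by_cases hn : n < t
    · rcases lt_or_ge (k + n) p with h | h
      · rw [Nat.mod_eq_of_lt h]; omega
      · rw [Nat.mod_eq_sub_mod h, Nat.mod_eq_of_lt (by omega)]; omega
    · omega
  rw [hfilter, card_union_of_disjoint (disjoint_left.mpr fun n h₁ h₂ => by
    simp only [mem_range, mem_Ico] at h₁ h₂; omega), card_range, Nat.card_Ico]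

section ZModInterval

variable {p t : ℕ} [NeZero p]

theorem mem_image_natCast_range_iff (ht : t ≤ p) (x : ZMod p) :
    x ∈ (range t).image ((↑) : ℕ → ZMod p) ↔ x.val < t := by
  simp only [mem_image, mem_range]
  constructor
  · rintro ⟨n, hn, rfl⟩
    rwa [ZMod.val_cast_of_lt (by omega)]
  · exact fun h => ⟨x.val, h, ZMod.natCast_zmod_val x⟩

theorem card_filter_natCast_add_mem_image_range (ht : t ≤ p) {k : ℕ} (hk : k < p) :
    #{b ∈ (range t).image ((↑) : ℕ → ZMod p) | (k : ZMod p) + b ∈ (range t).image (↑)} =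
      (t - k) + (t - (p - k)) := by
  rw [filter_image, card_image_of_injOn
    ((CharP.natCast_injOn_Iio (ZMod p) p).mono fun n hn => by
      simp only [coe_filter, mem_range] at hn; exact lt_of_lt_of_le hn.1 ht),
    ← card_filter_add_mod_lt ht hk]
  congr 1
  refine filter_congr fun n _ => ?_
  rw [← Nat.cast_add, mem_image_natCast_range_iff ht, ZMod.val_natCast]

end ZModInterval

-- Truncated subtraction merges the two branches: `2 * t - p` is `max 0 (2t - p)` and
-- `(p - 2 * t) + (2 * t - p)` is `|p - 2t|`.
theorem multisetM_eq_replicate_add (p t : ℕ) :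
    multisetM p t = Multiset.replicate ((p - 2 * t) + (2 * t - p) + 1) ((2 * t - p : ℕ) : ℤ)
      + 2 • (Icc ((2 * t - p : ℕ) + 1 : ℤ) (t - 1)).val + {(t : ℤ)} := by
  unfold multisetM
  split_ifs with h
  · rw [show p - 2 * t + 1 = (p - 2 * t) + (2 * t - p) + 1 by omega,
      show ((2 * t - p : ℕ) : ℤ) = 0 by omega, zero_add]
  · rw [show 2 * t - p + 1 = (p - 2 * t) + (2 * t - p) + 1 by omega,
      show ((2 * t - p : ℕ) : ℤ) = 2 * t - p by omega]

theorem card_filter_range_tsub_add_tsub_eq {p t : ℕ} (ht1 : 1 ≤ t) (ht2 : t < p) (x : ℤ) :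
    #{k ∈ range p | x = ((t - k + (t - (p - k)) : ℕ) : ℤ)} =
      (if ((2 * t - p : ℕ) : ℤ) = x then (p - 2 * t) + (2 * t - p) + 1 else 0)
        + 2 * (if ((2 * t - p : ℕ) + 1 : ℤ) ≤ x ∧ x ≤ t - 1 then 1 else 0)
        + (if x = t then 1 else 0) := by
  by_cases hmin : x = ((2 * t - p : ℕ) : ℤ)
  · have : {k ∈ range p | x = ((t - k + (t - (p - k)) : ℕ) : ℤ)} =
        Icc (min t (p - t)) (max t (p - t)) := by
      ext k; simp only [mem_filter, mem_range, mem_Icc]; omega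
    rw [this, Nat.card_Icc]
    split_ifs <;> omega
  by_cases hmax : x = t
  · have : {k ∈ range p | x = ((t - k + (t - (p - k)) : ℕ) : ℤ)} = {0} := by
      ext k; simp only [mem_filter, mem_range, mem_singleton]; omega
    rw [this, card_singleton]
    split_ifs <;> omega
  by_cases hmid : ((2 * t - p : ℕ) + 1 : ℤ) ≤ x ∧ x ≤ t - 1
  · lift x to ℕ using by omega
    have : {k ∈ range p | (x : ℤ) = ((t - k + (t - (p - k)) : ℕ) : ℤ)} =
        {t - x, p + x - t} := by
      ext k; simp only [mem_filter, mem_range, mem_insert, mem_singleton]; omega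
    rw [this, card_pair (by omega)]
    split_ifs <;> omega
  · have : {k ∈ range p | x = ((t - k + (t - (p - k)) : ℕ) : ℤ)} = ∅ := by
      ext k; simp only [mem_filter, mem_range, notMem_empty, iff_false]; omega
    rw [this, card_empty]
    split_ifs <;> omega

theorem map_range_tsub_add_tsub_eq_multisetM {p t : ℕ} (ht1 : 1 ≤ t) (ht2 : t < p) :
    (range p).val.map (fun k => ((t - k + (t - (p - k)) : ℕ) : ℤ)) = multisetM p t := by
  ext x
  rw [Multiset.count_map, multisetM_eq_replicate_add]
  simp only [Multiset.count_add, Multiset.count_replicate, Multiset.count_nsmul,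
    Multiset.count_singleton, Multiset.count_eq_of_nodup (Icc _ _).nodup, mem_val, mem_Icc]
  exact card_filter_range_tsub_add_tsub_eq ht1 ht2 x

theorem map_univ_card_filter_add_mem_eq_multisetM {p t : ℕ} [NeZero p] (ht1 : 1 ≤ t)
    (ht2 : t < p) :
    (univ : Finset (ZMod p)).val.map (fun a => ((#{b ∈ (range t).image (↑) |
        a + b ∈ (range t).image ((↑) : ℕ → ZMod p)} : ℕ) : ℤ)) =
      multisetM p t := by
  have huniv : (univ : Finset (ZMod p)) = (range p).image (↑) := .symm <|
    eq_univ_of_forall fun x =>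
      mem_image.mpr ⟨x.val, mem_range.mpr x.val_lt, x.natCast_zmod_val⟩
  rw [huniv, image_val_of_injOn (by simpa using CharP.natCast_injOn_Iio (ZMod p) p),
    Multiset.map_map, ← map_range_tsub_add_tsub_eq_multisetM ht1 ht2]
  refine Multiset.map_congr rfl fun k hk => ?_
  rw [Function.comp_apply,
    card_filter_natCast_add_mem_image_range ht2.le (by simpa using hk)]

theorem stmt_14_general {p : ℕ} {s t : ℕ}
    (ht1 : 1 ≤ t) (ht2 : t ≤ p - 1)
    (B : Finset (ZMod p)) (hB : B = (Finset.range t).image (fun n : ℕ => (n : ZMod p)))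
    (r : ℤ) :
    (∃ A : Finset (ZMod p), A.card = s ∧
        (((A ×ˢ B ×ˢ B).filter (fun x => x.2.2 = x.1 + x.2.1)).card : ℤ) = r)
      ↔ ∃ N : Multiset ℤ, N ≤ multisetM p t ∧ Multiset.card N = s ∧ N.sum = r := by
  have : NeZero p := ⟨by omega⟩
  subst hB
  simp only [card_filter_eq_add_eq_sum, Nat.cast_sum]
  rw [← map_univ_card_filter_add_mem_eq_multisetM ht1 (by omega)]
  exact exists_card_sum_eq_iff_exists_le_map _ s r

theorem stmt_14 {p : ℕ} [NeZero p] (hodd : Odd p) {s t : ℕ}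
    (hs1 : 1 ≤ s) (hs2 : s ≤ p - 1) (ht1 : 1 ≤ t) (ht2 : t ≤ p - 1)
    (B : Finset (ZMod p)) (hB : B = (Finset.range t).image (fun n : ℕ => (n : ZMod p)))
    (r : ℤ) :
    (∃ A : Finset (ZMod p), A.card = s ∧
        (((A ×ˢ B ×ˢ B).filter (fun x => x.2.2 = x.1 + x.2.1)).card : ℤ) = r)
      ↔ ∃ N : Multiset ℤ, N ≤ multisetM p t ∧ Multiset.card N = s ∧ N.sum = r :=
  stmt_14_general ht1 ht2 B hB r
end

section
/- Let p be an odd integer, 1 ≤ s,t ≤ p−1, and B = {0,1,…,t−1} ⊆ Z_p. With f(s,t) and g(s,t) as defined below, for every integer r with f(s,t) ≤ r ≤ g(s,t), there exists a subset A of Z_p with |A| = s and r(A,B,B) = r. -/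
lemma myIVT (w : ℕ → ℤ) (hlip : ∀ i, w i ≤ w (i+1) + 1) :
    ∀ (n a : ℕ) (r : ℤ), w (a+n) ≤ r → r ≤ w a → ∃ j, a ≤ j ∧ j ≤ a+n ∧ w j = r := by
  intro n
  induction n with
  | zero => exact fun a r h1 h2 => ⟨a, le_refl _, le_refl _, le_antisymm (by simpa using h1) h2⟩
  | succ n ih =>
    intro a r h1 h2
    by_cases hr : r ≤ w (a+1)
    · obtain ⟨j, hj1, hj2, hj3⟩ := ih (a+1) r (by rw [show a + 1 + n = a + (n+1) by omega]; exact h1) hr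
      exact ⟨j, by omega, by omega, hj3⟩
    · exact ⟨a, le_rfl, by omega, by have := hlip a; omega⟩

lemma mySubset (w : ℕ → ℤ) (hlip : ∀ i, w i ≤ w (i+1) + 1) :
    ∀ (P s : ℕ), s ≤ P → ∀ r : ℤ, (∑ i ∈ Finset.Ico (P-s) P, w i) ≤ r →
      r ≤ ∑ i ∈ Finset.range s, w i →
      ∃ S : Finset ℕ, S ⊆ Finset.range P ∧ S.card = s ∧ ∑ i ∈ S, w i = r := by
  intro P
  induction P with
  | zero =>
    intro s hs r h1 h2
    interval_cases s
    simp at h1 h2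
    exact ⟨∅, by simp, by simp, by simp; omega⟩
  | succ P ih =>
    intro s hs r h1 h2
    match s with
    | 0 =>
      simp at h1 h2
      exact ⟨∅, by simp, by simp, by simp; omega⟩
    | s' + 1 =>
      have hs' : s' ≤ P := by omega
      by_cases hcase : (∑ i ∈ Finset.range s', w i) + w P ≤ r
      · obtain ⟨j, hj1, hj2, hj3⟩ := myIVT w hlip (P - s') s' (r - ∑ i ∈ Finset.range s', w i)
          (by rw [Nat.add_sub_cancel' hs']; linarith)
          (by rw [Finset.sum_range_succ] at h2; linarith)
        refine ⟨insert j (Finset.range s'), ?_, ?_, ?_⟩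
        · rw [Finset.insert_subset_iff]
          exact ⟨Finset.mem_range.mpr (by omega), Finset.range_subset_range.mpr (by omega)⟩
        · rw [Finset.card_insert_of_notMem (by simp [Finset.mem_range]; omega)]
          simp
        · rw [Finset.sum_insert (by simp [Finset.mem_range]; omega)]
          linarith
      · have hidx : P + 1 - (s' + 1) = P - s' := by omega
        rw [hidx, Finset.sum_Ico_succ_top (by omega : P - s' ≤ P)] at h1
        obtain ⟨S', hsub, hcard, hsum⟩ := ih s' hs' (r - w P) (by linarith) (by linarith)
        refine ⟨insert P S', ?_, ?_, ?_⟩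
        · rw [Finset.insert_subset_iff]
          exact ⟨Finset.mem_range.mpr (by omega), hsub.trans (Finset.range_subset_range.mpr (by omega))⟩
        · rw [Finset.card_insert_of_notMem (fun h => by have := Finset.mem_range.mp (hsub h); omega), hcard]
        · rw [Finset.sum_insert (fun h => by have := Finset.mem_range.mp (hsub h); omega)]
          linarith


lemma sq_helper (d : ℤ) (hd : 1 ≤ d) : (2*d-1)*d - (2*d-1)^2/4 = d^2 := by
  rcases Int.even_or_odd d with ⟨m,hm⟩|⟨m,hm⟩ <;> subst hm <;> ring_nf <;> omega

def wN (p t i : ℕ) : ℕ := max (t - (i+1)/2) (2*t - p)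

lemma wN_mono (p t i : ℕ) : wN p t (i+1) ≤ wN p t i := by unfold wN; omega

lemma wN_lip (p t i : ℕ) : wN p t i ≤ wN p t (i+1) + 1 := by unfold wN; omega

lemma wN_cast (p t : ℕ) (ht : t ≤ p) (i : ℕ) :
    ((wN p t i : ℕ) : ℤ) =
      max (2*(t:ℤ)-p) 0 + max (((t:ℤ) - max (2*(t:ℤ)-p) 0) - ((i:ℤ)+1)/2) 0 := by
  unfold wN; omega

lemma Ssum (c d : ℤ) (hc : 0 ≤ c) (hd : 1 ≤ d) (n : ℕ) :
    ∑ i ∈ Finset.range n, (c + max (d - ((i:ℤ)+1)/2) 0)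
      = n*c + (min (n:ℤ) (2*d-1))*d - (min (n:ℤ) (2*d-1))^2/4 := by
  induction n with
  | zero =>
    rw [Finset.sum_range_zero]
    push_cast
    rw [show min (0:ℤ) (2*d-1) = 0 from by omega]
    ring
  | succ n ih =>
    rw [Finset.sum_range_succ, ih]
    push_cast
    by_cases h : (n:ℤ) + 1 ≤ 2*d - 1
    · rw [show min ((n:ℤ)) (2*d-1) = (n:ℤ) from by omega,
        show min ((n:ℤ)+1) (2*d-1) = (n:ℤ)+1 from by omega,
        show max (d - ((n:ℤ)+1)/2) 0 = d - ((n:ℤ)+1)/2 from by omega]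
      rcases Nat.even_or_odd n with ⟨m,hm⟩|⟨m,hm⟩ <;> subst hm <;> push_cast <;> ring_nf <;> omega
    · rw [show min ((n:ℤ)) (2*d-1) = 2*d-1 from by omega,
        show min ((n:ℤ)+1) (2*d-1) = 2*d-1 from by omega,
        show max (d - ((n:ℤ)+1)/2) 0 = 0 from by omega]
      ring

lemma wNsum (p t : ℕ) (c d : ℤ) (h1 : 1 ≤ t) (h2 : t + 1 ≤ p)
    (hc : c = max (2*(t:ℤ)-p) 0) (hd : d = (t:ℤ) - c) (n : ℕ) :
    ∑ i ∈ Finset.range n, ((wN p t i : ℕ) : ℤ)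
      = n*c + (min (n:ℤ) (2*d-1))*d - (min (n:ℤ) (2*d-1))^2/4 := by
  subst hd; subst hc
  have htp : t ≤ p := by omega
  rw [Finset.sum_congr rfl (fun i _ => wN_cast p t htp i)]
  exact Ssum (max (2*(t:ℤ)-p) 0) ((t:ℤ) - max (2*(t:ℤ)-p) 0) (le_max_right _ _) (by omega) n

lemma gIneq (P S T c d M : ℤ) (hP : P % 2 = 1) (hS : 1 ≤ S) (hS2 : S ≤ P - 1)
    (hT : 1 ≤ T) (hT2 : T ≤ P - 1)
    (hc : c = max (2*T-P) 0) (hd : d = T - c) (hM : M = min S (2*d-1)) :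
    gBound P S T ≤ S*c + M*d - M^2/4 := by
  unfold gBound
  split_ifs with h1 h2
  · have hc0 : c = 0 := by omega
    have hdT : d = T := by omega
    have hMv : M = 2*T - 1 := by omega
    rw [hMv, hdT, hc0]
    have hqT := sq_helper T hT
    linarith
  · have hMS : M = S := by omega
    have hcd : c + d = T := by omega
    have e1 : S*c + S*d = S*T := by rw [show S*c + S*d = S*(c+d) from by ring, hcd]
    rw [hMS]
    have e2 : S*(4*T-S)+3 = 4*(S*T) - S*S + 3 := by ring
    have e3 : S^2 = S*S := by ring
    have e4 : 0 ≤ S*S := mul_self_nonneg S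
    have e5 : S*S ≤ 4*(S*T) := by nlinarith
    omega
  · have hcv : c = 2*T - P := by omega
    have hdv : d = P - T := by omega
    have hMv : M = 2*(P-T) - 1 := by omega
    rw [hMv, hdv, hcv]
    have hq := sq_helper (P-T) (by omega)
    linarith

lemma fIneq (P S T c d M' : ℤ) (hP : P % 2 = 1) (hS : 1 ≤ S) (hS2 : S ≤ P - 1)
    (hT : 1 ≤ T) (hT2 : T ≤ P - 1)
    (hc : c = max (2*T-P) 0) (hd : d = T - c) (hM' : M' = min (P-S) (2*d-1)) :
    (P*c + (2*d-1)*d - (2*d-1)^2/4) - ((P-S)*c + M'*d - M'^2/4) ≤ fBound P S T := by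
  unfold fBound
  split_ifs with h1 h2
  · have hc0 : c = 0 := by omega
    have hdT : d = T := by omega
    have hMv : M' = 2*T - 1 := by omega
    rw [hMv, hdT, hc0]
    linarith
  · by_cases hcp : 2*T ≤ P
    · have hc0 : c = 0 := by omega
      have hdT : d = T := by omega
      have hMv : M' = P - S := by omega
      rw [hMv, hdT, hc0]
      have hqT := sq_helper T hT
      have e1 : (S + 2*T - P)^2 = 4*(T*T - (P-S)*T) + (P-S)*(P-S) := by ring
      have e2 : T^2 = T*T := by ring
      have e3 : (P-S)^2 = (P-S)*(P-S) := by ring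
      have e4 : 0 ≤ (P-S)*(P-S) := mul_self_nonneg _
      have e5 : 0 ≤ (S+2*T-P)^2 := sq_nonneg _
      omega
    · have hcv : c = 2*T - P := by omega
      have hdv : d = P - T := by omega
      have hMv : M' = P - S := by omega
      rw [hMv, hdv, hcv]
      have hqPT := sq_helper (P - T) (by omega)
      have e1 : (S + 2*T - P)^2
          = 4*( P*(2*T-P) + (P-T)*(P-T) - (P-S)*(2*T-P) - (P-S)*(P-T) ) + (P-S)*(P-S) := by ring
      have e2 : (P-T)^2 = (P-T)*(P-T) := by ring
      have e3 : (P-S)^2 = (P-S)*(P-S) := by ring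
      have e4 : 0 ≤ (P-S)*(P-S) := mul_self_nonneg _
      have e5 : 0 ≤ (S+2*T-P)^2 := sq_nonneg _
      omega
  · have hcv : c = 2*T - P := by omega
    have hdv : d = P - T := by omega
    have hMv : M' = 2*(P-T) - 1 := by omega
    rw [hMv, hdv, hcv]
    have e1 : P*(2*T-P) - (P-S)*(2*T-P) = S*(2*T-P) := by ring
    linarith

theorem stmt_16 {p : ℕ} [NeZero p] (hodd : Odd p) {s t : ℕ}
    (hs1 : 1 ≤ s) (hs2 : s ≤ p - 1) (ht1 : 1 ≤ t) (ht2 : t ≤ p - 1)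
    (B : Finset (ZMod p)) (hB : B = (Finset.range t).image (fun n : ℕ => (n : ZMod p)))
    (r : ℤ) (hr1 : fBound p s t ≤ r) (hr2 : r ≤ gBound p s t) :
    ∃ A : Finset (ZMod p), A.card = s ∧
      (((A ×ˢ B ×ˢ B).filter (fun x => x.2.2 = x.1 + x.2.1)).card : ℤ) = r := by
  have hp1 : 1 ≤ p := Nat.pos_of_ne_zero (NeZero.ne p)
  have hpm : p % 2 = 1 := Nat.odd_iff.mp hodd
  have hp3 : 3 ≤ p := by omega
  have htp : t < p := by omega
  -- the enumeration of ZMod p in decreasing order of counts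
  set E : ℕ → ZMod p := fun i =>
    if i % 2 = 1 then (((i+1)/2 : ℕ) : ZMod p) else -(((i/2 : ℕ)) : ZMod p) with hE
  have hEval : ∀ i : ℕ, i < p →
      (E i).val = (if i % 2 = 1 then (i+1)/2 else if i = 0 then 0 else p - i/2) := by
    intro i hi
    by_cases h2 : i % 2 = 1
    · simp only [hE, if_pos h2]
      exact ZMod.val_cast_of_lt (by omega)
    · simp only [hE, if_neg h2]
      by_cases h0 : i = 0
      · subst h0; simp
      · rw [ZMod.neg_val, if_neg, ZMod.val_cast_of_lt (by omega : i/2 < p), if_neg h0]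
        intro hz
        have := (ZMod.natCast_eq_zero_iff (i/2) p).mp hz
        have := Nat.le_of_dvd (by omega) this
        omega
  -- membership in B
  have hmemB : ∀ z : ZMod p, z ∈ B ↔ z.val < t := by
    intro z
    rw [hB]
    simp only [Finset.mem_image, Finset.mem_range]
    constructor
    · rintro ⟨n, hn, rfl⟩
      rwa [ZMod.val_cast_of_lt (by omega)]
    · intro h
      exact ⟨z.val, h, ZMod.natCast_rightInverse z⟩
  -- the count function
  have hcount : ∀ a : ZMod p,
      (B.filter fun b => a + b ∈ B).card = (t - a.val) + (t + a.val - p) := by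
    intro a
    have hx : a.val < p := ZMod.val_lt a
    have himg : B.filter (fun b => a + b ∈ B)
        = ((Finset.range t).filter (fun n => (a.val + n) % p < t)).image
            (fun n : ℕ => (n : ZMod p)) := by
      ext z
      simp only [Finset.mem_filter, Finset.mem_image, Finset.mem_range]
      constructor
      · rintro ⟨hzB, hzadd⟩
        rw [hmemB] at hzB hzadd
        refine ⟨z.val, ⟨hzB, ?_⟩, ZMod.natCast_rightInverse z⟩
        rwa [ZMod.val_add] at hzadd
      · rintro ⟨n, ⟨hn, hmod⟩, rfl⟩
        have hvn : ((n : ZMod p)).val = n := ZMod.val_cast_of_lt (by omega)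
        constructor
        · rw [hmemB, hvn]; exact hn
        · rw [hmemB, ZMod.val_add, hvn]; exact hmod
    rw [himg, Finset.card_image_of_injOn (fun u hu v hv huv => by
      simp only [Finset.coe_filter, Finset.mem_range, Set.mem_setOf_eq] at hu hv
      have : ((u : ZMod p)).val = ((v : ZMod p)).val := by rw [huv]
      rwa [ZMod.val_cast_of_lt (by omega), ZMod.val_cast_of_lt (by omega)] at this)]
    have hset : (Finset.range t).filter (fun n => (a.val + n) % p < t)
        = Finset.range (t - a.val) ∪ Finset.Ico (p - a.val) t := by
      ext b
      simp only [Finset.mem_filter, Finset.mem_range, Finset.mem_union, Finset.mem_Ico]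
      by_cases hbt : b < t
      · by_cases hb : a.val + b < p
        · rw [Nat.mod_eq_of_lt hb]; omega
        · rw [Nat.mod_eq_sub_mod (by omega : p ≤ a.val + b),
            Nat.mod_eq_of_lt (by omega : a.val + b - p < p)]
          omega
      · constructor
        · rintro ⟨h1, _⟩; exact absurd h1 hbt
        · intro h; exact absurd (by omega : b < t) hbt
    rw [hset, Finset.card_union_of_disjoint (by
        rw [Finset.disjoint_left]
        intro b hb hb'
        simp only [Finset.mem_range] at hb
        simp only [Finset.mem_Ico] at hb'
        omega),
      Finset.card_range, Nat.card_Ico]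
    omega
  -- counts along the enumeration
  have hcw : ∀ i : ℕ, i < p → (B.filter fun b => (E i) + b ∈ B).card = wN p t i := by
    intro i hi
    rw [hcount (E i), hEval i hi]
    unfold wN
    split_ifs <;> omega
  -- injectivity
  have hinj : ∀ i ∈ Finset.range p, ∀ j ∈ Finset.range p, E i = E j → i = j := by
    intro i hi j hj hij
    rw [Finset.mem_range] at hi hj
    have hv : (E i).val = (E j).val := by rw [hij]
    rw [hEval i hi, hEval j hj] at hv
    split_ifs at hv <;> omega
  -- bounds
  set C : ℤ := max (2*(t:ℤ)-(p:ℤ)) 0 with hC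
  set D : ℤ := (t:ℤ) - C with hD
  have hGsum := wNsum p t C D ht1 (by omega) hC hD s
  have hFsumP := wNsum p t C D ht1 (by omega) hC hD p
  have hFsumPS := wNsum p t C D ht1 (by omega) hC hD (p - s)
  have hpmz : (p:ℤ) % 2 = 1 := by omega
  have hSz : (1:ℤ) ≤ (s:ℤ) := by omega
  have hSz2 : (s:ℤ) ≤ (p:ℤ) - 1 := by omega
  have hTz : (1:ℤ) ≤ (t:ℤ) := by omega
  have hTz2 : (t:ℤ) ≤ (p:ℤ) - 1 := by omega
  have hG : gBound p s t ≤ ∑ i ∈ Finset.range s, ((wN p t i : ℕ) : ℤ) := by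
    rw [hGsum]
    exact gIneq (p:ℤ) (s:ℤ) (t:ℤ) C D _ hpmz hSz hSz2 hTz hTz2 hC hD rfl
  have hF : ∑ i ∈ Finset.Ico (p - s) p, ((wN p t i : ℕ) : ℤ) ≤ fBound p s t := by
    rw [Finset.sum_Ico_eq_sub _ (by omega : p - s ≤ p), hFsumP, hFsumPS]
    have hcast : ((p - s : ℕ) : ℤ) = (p:ℤ) - (s:ℤ) := by omega
    rw [hcast]
    have hminp : min ((p:ℕ):ℤ) (2*D-1) = 2*D-1 := by omega
    rw [hminp]
    exact fIneq (p:ℤ) (s:ℤ) (t:ℤ) C D _ hpmz hSz hSz2 hTz hTz2 hC hD rfl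
  -- get the subset of ranks
  obtain ⟨S, hSsub, hScard, hSsum⟩ :=
    mySubset (fun i => ((wN p t i : ℕ) : ℤ))
      (fun i => by have := wN_lip p t i; push_cast; omega)
      p s (by omega) r (le_trans hF hr1) (le_trans hr2 hG)
  refine ⟨S.image E, ?_, ?_⟩
  · rw [Finset.card_image_of_injOn (fun u hu v hv huv =>
      hinj u (hSsub hu) v (hSsub hv) huv), hScard]
  · have hdecomp : (((S.image E) ×ˢ B ×ˢ B).filter (fun x => x.2.2 = x.1 + x.2.1)).card
        = ∑ a ∈ S.image E, (B.filter fun b => a + b ∈ B).card := by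
      rw [Finset.card_filter, Finset.sum_product]
      refine Finset.sum_congr rfl fun a _ => ?_
      rw [Finset.sum_product, Finset.card_filter]
      refine Finset.sum_congr rfl fun b _ => ?_
      exact Finset.sum_ite_eq' B (a+b) (fun _ => 1)
    rw [hdecomp, Finset.sum_image (fun u hu v hv huv => hinj u (hSsub hu) v (hSsub hv) huv)]
    rw [Finset.sum_congr rfl (fun i hi => hcw i (Finset.mem_range.mp (hSsub hi)))]
    push_cast
    exact hSsum
end

section
/- Let p be an odd prime and 1 ≤ s,t ≤ p−1. The set of values taken by r(A,B,B), as A and B range over all subsets of Z_p of cardinality s and t respectively, is exactly the closed integer interval [f(s,t), g(s,t)]. -/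
open Finset
open scoped Pointwise

namespace AdditiveTriples

section AddCommGroup

variable {G : Type*} [AddCommGroup G] [DecidableEq G]

def sumReps (A B : Finset G) (x : G) : Finset (G × G) :=
  (A ×ˢ B).filter fun q => q.1 + q.2 = x

@[simp]
lemma mem_sumReps {A B : Finset G} {x : G} {q : G × G} :
    q ∈ sumReps A B x ↔ q.1 ∈ A ∧ q.2 ∈ B ∧ q.1 + q.2 = x := by
  simp [sumReps, and_assoc]

lemma card_sumReps_le_right (A B : Finset G) (x : G) : #(sumReps A B x) ≤ #B :=
  card_le_card_of_injOn Prod.snd (fun q hq => (mem_sumReps.1 hq).2.1) fun q hq r hr h => by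
    simp only [mem_coe, mem_sumReps] at hq hr
    exact Prod.ext (by rw [eq_sub_of_add_eq hq.2.2, eq_sub_of_add_eq hr.2.2, h]) h

lemma sumReps_mono {A A' B B' : Finset G} (hA : A ⊆ A') (hB : B ⊆ B') (x : G) :
    sumReps A B x ⊆ sumReps A' B' x := fun _ hq => by
  rw [mem_sumReps] at hq ⊢; exact ⟨hA hq.1, hB hq.2.1, hq.2.2⟩

section Dyson

variable (e : G) (A B : Finset G)

lemma mem_addDysonETransform_fst {a : G} :
    a ∈ (addDysonETransform e (A, B)).1 ↔ a ∈ A ∨ a - e ∈ B := by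
  simp only [addDysonETransform_fst, mem_union, mem_vadd_finset, vadd_eq_add]
  refine or_congr_right ⟨?_, fun h => ⟨a - e, h, add_sub_cancel e a⟩⟩
  rintro ⟨y, hy, rfl⟩
  simpa using hy

lemma mem_addDysonETransform_snd {b : G} :
    b ∈ (addDysonETransform e (A, B)).2 ↔ b ∈ B ∧ e + b ∈ A := by
  simp [mem_neg_vadd_finset_iff]

/-- A pair `(a, b)` representing `x` for the transformed sets is kept if `a ∈ A` and is otherwise
sent to `(e + b, a - e)`; this injects into the representations for `(A, B)` that are not
representations for the leftover pair `(A \ (e +ᵥ B'), B \ B')`. -/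
lemma card_sumReps_addDysonETransform_add_le (x : G) :
    #(sumReps (addDysonETransform e (A, B)).1 (addDysonETransform e (A, B)).2 x) +
        #(sumReps (A \ (e +ᵥ (addDysonETransform e (A, B)).2))
          (B \ (addDysonETransform e (A, B)).2) x) ≤ #(sumReps A B x) := by
  set B' := (addDysonETransform e (A, B)).2
  have hsub : sumReps (A \ (e +ᵥ B')) (B \ B') x ⊆ sumReps A B x :=
    sumReps_mono sdiff_subset sdiff_subset x
  let ψ : G × G → G × G := fun q => if q.1 ∈ A then q else (e + q.2, q.1 - e)
  have hmaps : Set.MapsTo ψ (sumReps (addDysonETransform e (A, B)).1 B' x)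
      ↑(sumReps A B x \ sumReps (A \ (e +ᵥ B')) (B \ B') x) := by
    rintro ⟨a, b⟩ hq
    simp only [mem_coe, mem_sumReps, mem_addDysonETransform_fst] at hq
    obtain ⟨ha, hb, rfl⟩ := hq
    have hb' := (mem_addDysonETransform_snd e A B).1 hb
    simp only [ψ, mem_coe, mem_sumReps, mem_sdiff]
    split_ifs with haA
    · exact ⟨⟨haA, hb'.1, rfl⟩, fun h => h.2.1.2 hb⟩
    · exact ⟨⟨hb'.2, ha.resolve_left haA, show e + b + (a - e) = a + b by abel⟩,
        fun h => h.1.2 (vadd_mem_vadd_finset hb)⟩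
  have hinj : Set.InjOn ψ (sumReps (addDysonETransform e (A, B)).1 B' x) := by
    rintro ⟨a, b⟩ hq ⟨c, d⟩ hr h
    simp only [mem_coe, mem_sumReps] at hq hr
    have hbA := ((mem_addDysonETransform_snd e A B).1 hq.2.1).2
    have hdA := ((mem_addDysonETransform_snd e A B).1 hr.2.1).2
    simp only [ψ] at h
    split_ifs at h with haA hcA hcA <;> simp only [Prod.mk.injEq] at h
    · exact Prod.ext h.1 h.2
    · exact absurd (by rw [← sub_add_cancel c e, ← h.2, add_comm]; exact hbA) hcA
    · exact absurd (by rw [← sub_add_cancel a e, h.2, add_comm]; exact hdA) haA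
    · exact Prod.ext (sub_left_inj.1 h.2) (add_left_cancel h.1)
  have := card_le_card_of_injOn ψ hmaps hinj
  rw [card_sdiff_of_subset hsub] at this
  have := card_le_card hsub
  omega

end Dyson

def tripleCount (A B : Finset G) : ℕ :=
  #((A ×ˢ B ×ˢ B).filter fun x => x.2.2 = x.1 + x.2.1)

lemma tripleCount_eq_sum_card_sumReps (A B : Finset G) :
    tripleCount A B = ∑ c ∈ B, #(sumReps A B c) := by
  rw [tripleCount, card_eq_sum_card_fiberwise (f := fun x => x.2.2) fun x hx => by
    simp only [mem_coe, mem_filter, mem_product] at hx; exact hx.1.2.2]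
  refine sum_congr rfl fun c hc =>
    card_nbij' (fun x => (x.1, x.2.1)) (fun q => (q.1, q.2, c)) ?_ ?_ ?_ ?_
  · rintro ⟨a, b, c'⟩ hx
    simp only [mem_coe, mem_filter, mem_product] at hx
    obtain ⟨⟨⟨ha, hb, -⟩, h⟩, rfl⟩ := hx
    simp [ha, hb, h]
  · rintro ⟨a, b⟩ hq
    simp only [mem_coe, mem_sumReps] at hq
    simp [hq.1, hq.2.1, hc, hq.2.2]
  · rintro ⟨a, b, c'⟩ hx
    simp only [mem_coe, mem_filter] at hx
    simp [hx.2]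
  · intro q _
    rfl

lemma tripleCount_eq_sum_card_filter (A B : Finset G) :
    tripleCount A B = ∑ a ∈ A, #(B.filter fun b => a + b ∈ B) := by
  rw [tripleCount, card_eq_sum_card_fiberwise (f := fun x => x.1) fun x hx => by
    simp only [mem_coe, mem_filter, mem_product] at hx; exact hx.1.1]
  refine sum_congr rfl fun a ha =>
    card_nbij' (fun x => x.2.1) (fun b => (a, b, a + b)) ?_ ?_ ?_ ?_
  · rintro ⟨a', b, c⟩ hx
    simp only [mem_coe, mem_filter, mem_product] at hx
    obtain ⟨⟨⟨-, hb, hc⟩, rfl⟩, rfl⟩ := hx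
    simpa [hb] using hc
  · intro b hb
    simp only [mem_coe, mem_filter] at hb
    simp [ha, hb.1, hb.2]
  · rintro ⟨a', b, c⟩ hx
    simp only [mem_coe, mem_filter] at hx
    obtain ⟨⟨-, rfl⟩, rfl⟩ := hx
    rfl
  · intro b _
    rfl

variable [Fintype G]

lemma sum_card_sumReps (A B : Finset G) : ∑ x, #(sumReps A B x) = #A * #B := by
  rw [← card_product]
  exact (card_eq_sum_card_fiberwise fun q _ => mem_univ (q.1 + q.2)).symm

lemma card_sumReps_univ_left (B : Finset G) (x : G) : #(sumReps univ B x) = #B := by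
  refine le_antisymm (card_sumReps_le_right _ _ _) ?_
  refine card_le_card_of_injOn (fun b => (x - b, b)) (fun b hb => ?_)
    fun _ _ _ _ h => congrArg Prod.snd h
  simpa using hb

def pollardSum (A B : Finset G) (m : ℕ) : ℕ :=
  ∑ x, min #(sumReps A B x) m

lemma pollardSum_eq_of_card_le {A B : Finset G} {m : ℕ} (h : #B ≤ m) :
    pollardSum A B m = #A * #B := by
  rw [← sum_card_sumReps]
  exact sum_congr rfl fun x _ => min_eq_left ((card_sumReps_le_right A B x).trans h)

lemma pollardSum_univ_left {B : Finset G} {m : ℕ} (h : m ≤ #B) :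
    pollardSum univ B m = Fintype.card G * m := by
  simp [pollardSum, card_sumReps_univ_left, h]

lemma pollardSum_addDysonETransform_le (e : G) (A B : Finset G) (m : ℕ) :
    pollardSum (addDysonETransform e (A, B)).1 (addDysonETransform e (A, B)).2 m ≤
      pollardSum A B m :=
  sum_le_sum fun x _ => min_le_min_right m <|
    (Nat.le_add_right _ _).trans (card_sumReps_addDysonETransform_add_le e A B x)

lemma card_mul_card_add_pollardSum_le (e : G) (A B : Finset G) {m : ℕ}
    (h : #(addDysonETransform e (A, B)).2 ≤ m) :
    #(addDysonETransform e (A, B)).1 * #(addDysonETransform e (A, B)).2 +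
        pollardSum (A \ (e +ᵥ (addDysonETransform e (A, B)).2))
          (B \ (addDysonETransform e (A, B)).2) (m - #(addDysonETransform e (A, B)).2) ≤
      pollardSum A B m := by
  rw [← sum_card_sumReps, pollardSum, pollardSum, ← sum_add_distrib]
  refine sum_le_sum fun x _ => ?_
  have := card_sumReps_addDysonETransform_add_le e A B x
  have := card_sumReps_le_right (addDysonETransform e (A, B)).1 (addDysonETransform e (A, B)).2 x
  omega

lemma tripleCount_univ_left (B : Finset G) : tripleCount univ B = #B * #B := by
  simp [tripleCount_eq_sum_card_sumReps, card_sumReps_univ_left]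

lemma tripleCount_compl_add (A B : Finset G) : tripleCount Aᶜ B + tripleCount A B = #B * #B := by
  simp only [tripleCount_eq_sum_card_filter, sum_compl_add_sum, ← tripleCount_univ_left B]

lemma sum_card_sumReps_add_pollardSum_le (A B C : Finset G) (m : ℕ) :
    ∑ c ∈ C, #(sumReps A B c) + pollardSum A B m ≤ #C * m + #A * #B := by
  have hC : ∑ c ∈ C, #(sumReps A B c) ≤ #C * m + ∑ x, (#(sumReps A B x) - m) := calc
    _ ≤ ∑ c ∈ C, (m + (#(sumReps A B c) - m)) := sum_le_sum fun c _ => by omega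
    _ = #C * m + ∑ c ∈ C, (#(sumReps A B c) - m) := by
      rw [sum_add_distrib, sum_const, smul_eq_mul]
    _ ≤ _ := Nat.add_le_add_left (sum_le_sum_of_subset (subset_univ C)) _
  have hexcess : ∑ x, (#(sumReps A B x) - m) + pollardSum A B m = #A * #B := by
    rw [← sum_card_sumReps, pollardSum, ← sum_add_distrib]
    exact sum_congr rfl fun x _ => by omega
  omega

end AddCommGroup

section ZMod

variable {p : ℕ}

lemma eq_univ_of_add_mem [Fact p.Prime] {A : Finset (ZMod p)} {δ : ZMod p} (hδ : δ ≠ 0)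
    (hA : A.Nonempty) (h : ∀ a ∈ A, a + δ ∈ A) : A = univ := by
  obtain ⟨a, ha⟩ := hA
  have hmul : ∀ n : ℕ, a + n * δ ∈ A := by
    intro n
    induction n with
    | zero => simpa using ha
    | succ n ih => simpa [add_mul, add_assoc] using h _ ih
  refine eq_univ_of_forall fun g => ?_
  simpa [div_mul_cancel₀ _ hδ] using hmul ((g - a) / δ).val

lemma exists_addDysonETransform_snd_ssubset [Fact p.Prime] {A B : Finset (ZMod p)}
    (hA : A.Nonempty) (hAu : A ≠ univ) (hB : 1 < #B) :
    ∃ e, (addDysonETransform e (A, B)).2.Nonempty ∧ (addDysonETransform e (A, B)).2 ⊂ B := by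
  by_contra! hstable
  obtain ⟨b₁, hb₁, b₂, hb₂, hne⟩ := one_lt_card.1 hB
  refine hAu (eq_univ_of_add_mem (sub_ne_zero.2 hne) hA fun a ha => ?_)
  have hb₂' : b₂ ∈ (addDysonETransform (a - b₂) (A, B)).2 :=
    (mem_addDysonETransform_snd _ _ _).2 ⟨hb₂, by simpa using ha⟩
  have heq : (addDysonETransform (a - b₂) (A, B)).2 = B :=
    (inter_subset_left.eq_or_ssubset).resolve_right (hstable _ ⟨b₂, hb₂'⟩)
  have := ((mem_addDysonETransform_snd _ _ _).1 (heq ▸ hb₁)).2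
  rwa [show a - b₂ + b₁ = a + (b₁ - b₂) by abel] at this

/-- Induction on `m` and `|B|` through the Dyson transform; when the transformed `B'` has fewer
than `m` elements, the leftover pair `(A \ (e +ᵥ B'), B \ B')` is handled with `m - |B'|`. -/
theorem pollard [Fact p.Prime] (m : ℕ) (A B : Finset (ZMod p)) (hmA : m ≤ #A) (hmB : m ≤ #B)
    (hAB : #A + #B ≤ p + m) : m * (#A + #B) ≤ pollardSum A B m + m * m := by
  induction m using Nat.strong_induction_on generalizing A B with | _ m ihm =>
  induction B using Finset.strongInduction generalizing A with | _ B ihB =>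
  rcases Nat.eq_zero_or_pos m with rfl | hm
  · simp
  rcases le_or_gt #B m with hBm | hmB'
  · rw [pollardSum_eq_of_card_le hBm, le_antisymm hBm hmB]
    nlinarith
  rcases eq_or_ne A univ with rfl | hAu
  · rw [card_univ, ZMod.card] at hAB ⊢
    rw [pollardSum_univ_left hmB, ZMod.card]
    nlinarith
  obtain ⟨e, hne, hss⟩ :=
    exists_addDysonETransform_snd_ssubset (card_pos.1 (by omega)) hAu (show 1 < #B by omega)
  set A' := (addDysonETransform e (A, B)).1
  set B' := (addDysonETransform e (A, B)).2
  have hcard : #A' + #B' = #A + #B := addDysonETransform.card e (A, B)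
  rcases le_or_gt m #B' with hmB' | hB'm
  · have := ihB B' hss A' (hmA.trans (card_le_card subset_union_left)) hmB' (by omega)
    have : pollardSum A' B' m ≤ pollardSum A B m := pollardSum_addDysonETransform_le e A B m
    rw [← hcard]
    omega
  · set k := #B'
    have hk : 0 < k := card_pos.2 hne
    have hA'' : #A ≤ #(A \ (e +ᵥ B')) + k := by
      simpa [card_vadd_finset] using card_le_card_sdiff_add_card (s := A) (t := e +ᵥ B')
    have hB'' : #(B \ B') = #B - k := card_sdiff_of_subset hss.subset
    have hA''A : #(A \ (e +ᵥ B')) ≤ #A := card_le_card sdiff_subset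
    have ih := ihm (m - k) (by omega) (A \ (e +ᵥ B')) (B \ B') (by omega) (by omega) (by omega)
    have hstep := card_mul_card_add_pollardSum_le e A B hB'm.le
    have hkB : k ≤ #B := card_le_card hss.subset
    zify [hB'm.le, hkB] at ih hstep hB'' hcard ⊢
    nlinarith

lemma tripleCount_add_le [Fact p.Prime] {A B : Finset (ZMod p)} {s t m : ℕ} (hA : #A = s)
    (hB : #B = t) (hms : m ≤ s) (hmt : m ≤ t) (hst : s + t ≤ p + m) :
    tripleCount A B + m * s ≤ s * t + m * m := by
  subst hA hB
  have h := sum_card_sumReps_add_pollardSum_le A B B m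
  rw [← tripleCount_eq_sum_card_sumReps] at h
  nlinarith [pollard m A B hms hmt hst]

lemma tripleCount_le_gBound [Fact p.Prime] {A B : Finset (ZMod p)} {s t : ℕ} (hA : #A = s)
    (hB : #B = t) : (tripleCount A B : ℤ) ≤ gBound p s t := by
  have hs : s ≤ p := hA ▸ (card_le_univ A).trans_eq (ZMod.card p)
  have ht : t ≤ p := hB ▸ (card_le_univ B).trans_eq (ZMod.card p)
  unfold gBound
  split_ifs with h₁ h₂
  · have := tripleCount_add_le (m := t) hA hB (by omega) le_rfl (by omega)
    zify at this
    nlinarith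
  · rw [Int.le_ediv_iff_mul_le (by norm_num)]
    obtain ⟨k, rfl | rfl⟩ := Nat.even_or_odd' s <;>
    · have := tripleCount_add_le (m := k) hA hB (by omega) (by omega) (by omega)
      push_cast at this ⊢
      nlinarith
  · have := tripleCount_add_le (m := s + t - p) hA hB (by omega) (by omega) (by omega)
    zify [show p ≤ s + t by omega] at this
    nlinarith

/-- The bounds are exchanged by complementing `A`, which replaces `r(A, B, B)` by
`|B|² - r(A, B, B)`. -/
lemma fBound_eq_sq_sub_gBound (p s t : ℤ) (hs : 0 ≤ s) :
    fBound p s t = t ^ 2 - gBound p (p - s) t := by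
  have key : (p - s) * (4 * t - (p - s)) = 4 * t ^ 2 - (s + 2 * t - p) ^ 2 := by ring
  unfold fBound gBound
  rw [key]
  split_ifs <;> try omega
  · rw [show s + 2 * t - p = 1 by omega]
    omega
  · obtain rfl : s = 0 := by omega
    ring
  · rw [show s + 2 * t - p = 2 * s - 1 by omega, show 2 * t - p = s - 1 by omega]
    ring_nf
    omega
  · ring

lemma fBound_le_tripleCount [Fact p.Prime] {A B : Finset (ZMod p)} {s t : ℕ} (hA : #A = s)
    (hB : #B = t) : fBound p s t ≤ (tripleCount A B : ℤ) := by
  have hs : s ≤ p := hA ▸ (card_le_univ A).trans_eq (ZMod.card p)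
  have hcompl := tripleCount_le_gBound (s := p - s) (by rw [card_compl, ZMod.card, hA]) hB
  have hsum := tripleCount_compl_add A B
  rw [fBound_eq_sq_sub_gBound _ _ _ s.cast_nonneg]
  rw [hB] at hsum
  push_cast [hs] at hcompl
  zify at hsum
  linarith

end ZMod

section SubsetSums

variable {ι : Type*} {w : ι → ℕ}

lemma sum_le_sum_of_forall_le {S T : Finset ι} (hcard : #S ≤ #T)
    (h : ∀ i ∈ S, ∀ j ∈ T, w i ≤ w j) : ∑ i ∈ S, w i ≤ ∑ j ∈ T, w j := by
  rcases S.eq_empty_or_nonempty with rfl | hS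
  · simp
  obtain ⟨i₀, hi₀, hmax⟩ := exists_max_image S w hS
  calc ∑ i ∈ S, w i ≤ #S • w i₀ := sum_le_card_nsmul S w _ hmax
    _ ≤ #T • w i₀ := nsmul_le_nsmul_left (Nat.zero_le _) hcard
    _ ≤ ∑ j ∈ T, w j := card_nsmul_le_sum T w _ fun j hj => h i₀ hi₀ j hj

variable [DecidableEq ι] {U S T : Finset ι}

lemma le_of_forall_add_one_ne (hw : (w '' U).OrdConnected) (hS : S ⊆ U)
    (hswap : ∀ i ∈ S, ∀ j ∈ U \ S, w j + 1 ≠ w i) : ∀ i ∈ S, ∀ j ∈ U \ S, w i ≤ w j := by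
  -- Take `j ∉ S` of largest weight below that of some `i ∈ S`. The value `w j + 1` is a weight,
  -- and wherever it is attained, inside or outside `S`, contradicts `hswap` or the choice of `j`.
  by_contra! hlt
  set X := (U \ S).filter fun j => ∃ i ∈ S, w j < w i
  obtain ⟨j, hjX, hjmax⟩ := exists_max_image X w (by
    obtain ⟨i, hi, j, hj, h⟩ := hlt
    exact ⟨j, mem_filter.2 ⟨hj, i, hi, h⟩⟩)
  obtain ⟨hj, i, hi, hji⟩ := mem_filter.1 hjX
  obtain ⟨j', hj', hj'w⟩ := hw.out ⟨j, (mem_sdiff.1 hj).1, rfl⟩ ⟨i, hS hi, rfl⟩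
    (show w j + 1 ∈ Set.Icc (w j) (w i) from ⟨by omega, hji⟩)
  by_cases hj'S : j' ∈ S
  · exact hswap j' hj'S j hj hj'w.symm
  rcases (show w j + 1 ≤ w i from hji).lt_or_eq with h | h
  · have := hjmax j' (mem_filter.2 ⟨mem_sdiff.2 ⟨hj', hj'S⟩, i, hi, hj'w ▸ h⟩)
    omega
  · exact hswap i hi j hj h

lemma sum_le_sum_of_forall_add_one_ne (hw : (w '' U).OrdConnected) (hS : S ⊆ U) (hT : T ⊆ U)
    (hcard : #T = #S) (hswap : ∀ i ∈ S, ∀ j ∈ U \ S, w j + 1 ≠ w i) :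
    ∑ i ∈ S, w i ≤ ∑ j ∈ T, w j := by
  have hle := le_of_forall_add_one_ne hw hS hswap
  have hdiff : ∑ i ∈ S \ T, w i ≤ ∑ j ∈ T \ S, w j :=
    sum_le_sum_of_forall_le (card_sdiff_comm hcard.symm).le
      fun i hi j hj => hle i (mem_sdiff.1 hi).1 j (sdiff_subset_sdiff hT le_rfl hj)
  rw [← sum_inter_add_sum_sdiff S T, ← sum_inter_add_sum_sdiff T S, inter_comm]
  omega

lemma exists_sum_add_one_eq (hw : (w '' U).OrdConnected) (hS : S ⊆ U) (hT : T ⊆ U)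
    (hcard : #T = #S) (hlt : ∑ j ∈ T, w j < ∑ i ∈ S, w i) :
    ∃ S' ⊆ U, #S' = #S ∧ ∑ i ∈ S', w i + 1 = ∑ i ∈ S, w i := by
  by_contra! hno
  refine hlt.not_ge (sum_le_sum_of_forall_add_one_ne hw hS hT hcard fun i hi j hj h => ?_)
  obtain ⟨hjU, hjS⟩ := mem_sdiff.1 hj
  refine hno (insert j (S.erase i)) (insert_subset hjU ((erase_subset i S).trans hS)) ?_ ?_
  · rw [card_insert_of_notMem (fun h' => hjS (mem_of_mem_erase h')), card_erase_add_one hi]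
  · rw [sum_insert (fun h' => hjS (mem_of_mem_erase h')), add_right_comm, h,
      add_sum_erase S w hi]

theorem exists_card_eq_sum_eq (hw : (w '' U).OrdConnected) (hS : S ⊆ U) (hT : T ⊆ U)
    (hcard : #T = #S) {n : ℕ} (hTn : ∑ j ∈ T, w j ≤ n) (hnS : n ≤ ∑ i ∈ S, w i) :
    ∃ R ⊆ U, #R = #S ∧ ∑ i ∈ R, w i = n := by
  induction hd : ∑ i ∈ S, w i - n generalizing S with
  | zero => exact ⟨S, hS, rfl, by omega⟩
  | succ d ih =>
    obtain ⟨S', hS'U, hS'card, hS'sum⟩ := exists_sum_add_one_eq hw hS hT hcard (by omega)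
    obtain ⟨R, hRU, hRcard, hRsum⟩ := ih hS'U (hcard.trans hS'card.symm) (by omega) (by omega)
    exact ⟨R, hRU, hRcard.trans hS'card, hRsum⟩

end SubsetSums

section Interval

lemma two_mul_sum_range_natCast (n : ℕ) : 2 * ∑ j ∈ range n, (j : ℤ) = n * (n - 1) := by
  induction n with
  | zero => simp
  | succ n ih => rw [sum_range_succ, mul_add, ih]; push_cast; ring

/-- `shiftOverlap p t k = |B ∩ (B - k)|` for the interval `B = {0, …, t - 1}` of `ZMod p`. -/
def shiftOverlap (p t k : ℕ) : ℕ := (t - k) + (t + k - p)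

def castRange (p t : ℕ) : Finset (ZMod p) := (range t).image (↑)

variable {p t s : ℕ}

lemma ordConnected_image_shiftOverlap (hp : 0 < p) (ht : t ≤ p) :
    (shiftOverlap p t '' ↑(range p)).OrdConnected := by
  refine ⟨?_⟩
  rintro _ ⟨a, ha, rfl⟩ _ ⟨b, hb, rfl⟩ v ⟨hav, hvb⟩
  simp only [coe_range, Set.mem_Iio] at ha hb
  refine ⟨t - v, mem_range.2 ?_, ?_⟩ <;> unfold shiftOverlap at * <;> omega

lemma le_two_mul_sum_range_shiftOverlap (c : ℕ) :
    (c : ℤ) * (2 * t - c + 1) ≤ 2 * ∑ k ∈ range c, (shiftOverlap p t k : ℤ) := calc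
  (c : ℤ) * (2 * t - c + 1) = 2 * ∑ k ∈ range c, ((t : ℤ) - k) := by
    rw [sum_sub_distrib, mul_sub, two_mul_sum_range_natCast, sum_const, card_range,
      nsmul_eq_mul]
    ring
  _ ≤ _ := by gcongr with k; unfold shiftOverlap; omega

lemma le_two_mul_sum_Ico_shiftOverlap {d : ℕ} (hd : d ≤ p) :
    (d : ℤ) * (2 * t - d - 1) ≤ 2 * ∑ k ∈ Ico (p - d) p, (shiftOverlap p t k : ℤ) := calc
  (d : ℤ) * (2 * t - d - 1) = 2 * ∑ j ∈ range d, ((t : ℤ) - d + j) := by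
    rw [sum_add_distrib, mul_add, two_mul_sum_range_natCast, sum_const, card_range,
      nsmul_eq_mul]
    ring
  _ ≤ _ := by
    rw [sum_Ico_eq_sum_range, Nat.sub_sub_self hd]
    gcongr with j hj
    rw [mem_range] at hj
    unfold shiftOverlap
    omega

lemma injOn_natCast_range : Set.InjOn (Nat.cast : ℕ → ZMod p) (range p) := fun a ha b hb h => by
  simpa [ZMod.val_natCast_of_lt (mem_range.1 ha), ZMod.val_natCast_of_lt (mem_range.1 hb)]
    using congrArg ZMod.val h

lemma card_castRange (ht : t ≤ p) : #(castRange p t) = t := by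
  rw [castRange, card_image_of_injOn
    (injOn_natCast_range.mono (coe_subset.2 (range_subset_range.2 ht))), card_range]

variable [NeZero p]

lemma mem_castRange (ht : t ≤ p) {x : ZMod p} : x ∈ castRange p t ↔ x.val < t := by
  refine ⟨fun hx => ?_, fun hx => mem_image.2 ⟨x.val, mem_range.2 hx, ZMod.natCast_zmod_val x⟩⟩
  obtain ⟨j, hj, rfl⟩ := mem_image.1 hx
  rw [ZMod.val_natCast_of_lt ((mem_range.1 hj).trans_le ht)]
  exact mem_range.1 hj

lemma card_filter_add_mem_castRange (ht : t ≤ p) {k : ℕ} (hk : k < p) :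
    #((castRange p t).filter fun b => (k : ZMod p) + b ∈ castRange p t) = shiftOverlap p t k := by
  have hwrap : ∀ j < t, (k + j) % p < t ↔ k + j < t ∨ p ≤ k + j := by
    intro j hj
    rcases lt_or_ge (k + j) p with h | h
    · rw [Nat.mod_eq_of_lt h]; omega
    · rw [Nat.mod_eq_sub_mod h, Nat.mod_eq_of_lt (by omega)]; omega
  have hfilter : (range t).filter (fun j : ℕ => (k : ZMod p) + (j : ZMod p) ∈ castRange p t) =
      range (t - k) ∪ Ico (p - k) t := by
    ext j
    simp only [mem_filter, mem_range, mem_union, mem_Ico, ← Nat.cast_add, mem_castRange ht,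
      ZMod.val_natCast]
    constructor
    · rintro ⟨hj, h⟩
      have := (hwrap j hj).1 h
      omega
    · intro h
      have hj : j < t := by omega
      exact ⟨hj, (hwrap j hj).2 (by omega)⟩
  rw [castRange, filter_image, card_image_of_injOn (injOn_natCast_range.mono
      (coe_subset.2 ((filter_subset _ _).trans (range_subset_range.2 ht)))), ← castRange, hfilter,
    card_union_of_disjoint (disjoint_left.2 fun j h₁ h₂ => by
      rw [mem_range] at h₁; rw [mem_Ico] at h₂; omega),
    card_range, Nat.card_Ico, shiftOverlap]
  omega

lemma tripleCount_image_castRange (ht : t ≤ p) {S : Finset ℕ} (hS : S ⊆ range p) :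
    tripleCount (S.image (↑)) (castRange p t) = ∑ k ∈ S, shiftOverlap p t k := by
  rw [tripleCount_eq_sum_card_filter, sum_image (injOn_natCast_range.mono (coe_subset.2 hS))]
  exact sum_congr rfl fun k hk => card_filter_add_mem_castRange ht (mem_range.1 (hS hk))

lemma sum_shiftOverlap_range (ht : t ≤ p) : ∑ k ∈ range p, shiftOverlap p t k = t * t := by
  have himage : (range p).image (Nat.cast : ℕ → ZMod p) = univ := eq_univ_of_forall fun x =>
    mem_image.2 ⟨x.val, mem_range.2 (ZMod.val_lt x), ZMod.natCast_zmod_val x⟩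
  rw [← tripleCount_image_castRange ht subset_rfl, himage, tripleCount_univ_left,
    card_castRange ht]

lemma exists_sum_shiftOverlap_add_eq (ht : t ≤ p) (hs : s ≤ p) {a : ℕ} (ha : a + (p - s) ≤ p)
    (hw : ∀ k ∈ Ico a (a + (p - s)), shiftOverlap p t k = 2 * t - p) :
    ∃ S ⊆ range p, #S = s ∧ ∑ k ∈ S, shiftOverlap p t k + (p - s) * (2 * t - p) = t * t := by
  have hsub : Ico a (a + (p - s)) ⊆ range p := fun k hk =>
    mem_range.2 (by rw [mem_Ico] at hk; omega)
  refine ⟨range p \ Ico a (a + (p - s)), sdiff_subset, ?_, ?_⟩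
  · rw [card_sdiff_of_subset hsub, card_range, Nat.card_Ico]
    omega
  · rw [← sum_shiftOverlap_range ht, ← sum_sdiff hsub, sum_congr rfl hw, sum_const, Nat.card_Ico,
      smul_eq_mul, Nat.add_sub_cancel_left]

/-- The `s` heaviest weights: those of `0, ±1, ±2, …` when `s` is in the middle range, and
otherwise everything except `p - s` points of the plateau `[t, p - t]` or `[p - t, t]` where the
weight is constant. -/
lemma exists_gBound_le_sum (hs : s ≤ p) (ht : t ≤ p) :
    ∃ S ⊆ range p, #S = s ∧ gBound p s t ≤ ((∑ k ∈ S, shiftOverlap p t k : ℕ) : ℤ) := by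
  unfold gBound
  split_ifs with h₁ h₂
  · obtain ⟨S, hS, hcard, hsum⟩ := exists_sum_shiftOverlap_add_eq (a := t) ht hs (by omega)
      fun k hk => by rw [mem_Ico] at hk; unfold shiftOverlap; omega
    refine ⟨S, hS, hcard, ?_⟩
    rw [show 2 * t - p = 0 by omega, mul_zero, add_zero] at hsum
    zify at hsum
    push_cast
    linarith
  · set d := s / 2
    have hdisj : Disjoint (range (s - d)) (Ico (p - d) p) := disjoint_left.2 fun k h₁ h₂ => by
      rw [mem_range] at h₁; rw [mem_Ico] at h₂; omega
    refine ⟨range (s - d) ∪ Ico (p - d) p, union_subset (range_subset_range.2 (by omega))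
      fun k hk => mem_range.2 (mem_Ico.1 hk).2, ?_, ?_⟩
    · rw [card_union_of_disjoint hdisj, card_range, Nat.card_Ico]
      omega
    have hnear := le_two_mul_sum_range_shiftOverlap (p := p) (t := t) (s - d)
    have hfar := le_two_mul_sum_Ico_shiftOverlap (t := t) (show d ≤ p by omega)
    rw [Int.ediv_le_iff_le_mul (by norm_num), sum_union hdisj]
    push_cast [show d ≤ s by omega] at hnear ⊢
    rcases Nat.even_or_odd' s with ⟨k, hk | hk⟩ <;>
    · obtain rfl : d = k := by omega
      rw [hk] at hnear ⊢
      push_cast at hnear ⊢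
      nlinarith
  · obtain ⟨S, hS, hcard, hsum⟩ := exists_sum_shiftOverlap_add_eq (a := p - t) ht hs (by omega)
      fun k hk => by rw [mem_Ico] at hk; unfold shiftOverlap; omega
    refine ⟨S, hS, hcard, ?_⟩
    zify [show p ≤ 2 * t by omega, hs] at hsum
    push_cast
    linarith

lemma exists_sum_le_fBound (hs : s ≤ p) (ht : t ≤ p) :
    ∃ S ⊆ range p, #S = s ∧ ((∑ k ∈ S, shiftOverlap p t k : ℕ) : ℤ) ≤ fBound p s t := by
  obtain ⟨S, hS, hcard, hsum⟩ := exists_gBound_le_sum (s := p - s) (by omega) ht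
  refine ⟨range p \ S, sdiff_subset, by rw [card_sdiff_of_subset hS, card_range, hcard]; omega, ?_⟩
  have htotal := sum_sdiff hS (f := shiftOverlap p t)
  rw [sum_shiftOverlap_range ht] at htotal
  rw [fBound_eq_sq_sub_gBound _ _ _ s.cast_nonneg]
  push_cast [hs] at hsum
  zify at htotal
  push_cast
  linarith

theorem exists_tripleCount_eq (hs : s ≤ p) (ht : t ≤ p) {r : ℤ} (hf : fBound p s t ≤ r)
    (hg : r ≤ gBound p s t) :
    ∃ A B : Finset (ZMod p), #A = s ∧ #B = t ∧ (tripleCount A B : ℤ) = r := by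
  obtain ⟨Sf, hSf, hSfcard, hSfsum⟩ := exists_sum_le_fBound hs ht
  obtain ⟨Sg, hSg, hSgcard, hSgsum⟩ := exists_gBound_le_sum hs ht
  lift r to ℕ using (Nat.cast_nonneg _).trans (hSfsum.trans hf)
  obtain ⟨R, hR, hRcard, hRsum⟩ :=
    exists_card_eq_sum_eq (ordConnected_image_shiftOverlap (NeZero.pos p) ht) hSg hSf
      (hSfcard.trans hSgcard.symm) (by exact_mod_cast hSfsum.trans hf)
      (by exact_mod_cast hg.trans hSgsum)
  refine ⟨R.image (↑), castRange p t, ?_, card_castRange ht, ?_⟩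
  · rw [card_image_of_injOn (injOn_natCast_range.mono (coe_subset.2 hR)), hRcard, hSgcard]
  · rw [tripleCount_image_castRange ht hR, hRsum]

end Interval

end AdditiveTriples

theorem stmt_17_general {p : ℕ} [NeZero p] (hp : p.Prime) {s t : ℕ}
    (hs2 : s ≤ p - 1) (ht2 : t ≤ p - 1) :
    {r : ℤ | ∃ A B : Finset (ZMod p), A.card = s ∧ B.card = t ∧
        (((A ×ˢ B ×ˢ B).filter (fun x => x.2.2 = x.1 + x.2.1)).card : ℤ) = r}
      = Set.Icc (fBound p s t) (gBound p s t) := by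
  have : Fact p.Prime := ⟨hp⟩
  ext r
  constructor
  · rintro ⟨A, B, hA, hB, rfl⟩
    exact ⟨AdditiveTriples.fBound_le_tripleCount hA hB, AdditiveTriples.tripleCount_le_gBound hA hB⟩
  · rintro ⟨hf, hg⟩
    exact AdditiveTriples.exists_tripleCount_eq (by omega) (by omega) hf hg

theorem stmt_17 {p : ℕ} [NeZero p] (hp : p.Prime) (hodd : Odd p) {s t : ℕ}
    (hs1 : 1 ≤ s) (hs2 : s ≤ p - 1) (ht1 : 1 ≤ t) (ht2 : t ≤ p - 1) :
    {r : ℤ | ∃ A B : Finset (ZMod p), A.card = s ∧ B.card = t ∧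
        (((A ×ˢ B ×ˢ B).filter (fun x => x.2.2 = x.1 + x.2.1)).card : ℤ) = r}
      = Set.Icc (fBound p s t) (gBound p s t) :=
  stmt_17_general hp hs2 ht2
end
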